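/- arXiv:2408.06289 — 5 statements merged into one kernel-verified Lean document; each statement's English description precedes it below -/
import Mathlib

section
/- For every function g : 𝔽₂ⁿ → ℂ, the Gowers-U³ average of g equals the averaged fourth moment of the Fourier coefficients of its derivatives: E_{x,h₁,h₂,h₃ ∈ 𝔽₂ⁿ} [ ∏_{ω ∈ 𝔽₂³} C^{|ω|} g(x + ω₁h₁ + ω₂h₂ + ω₃h₃) ] = E_{v ∈ 𝔽₂ⁿ} [ ∑_{w ∈ 𝔽₂ⁿ} |ĝ_v(w)|⁴ ], where C^{|ω|} g = g if ω₁+ω₂+ω₃ is even (as an integer) and C^{|ω|} g = conj(g) if it is odd. In particular, the left-hand side is a nonnegative real number. -/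
open Finset

section Stmt0Aux

abbrev Vv (n : ℕ) := Fin n → ZMod 2

noncomputable def chi {n : ℕ} (w x : Vv n) : ℂ := (-1 : ℂ) ^ (∑ i, w i * x i : ZMod 2).val

lemma neg_one_pow_val_add (a b : ZMod 2) :
    (-1 : ℂ) ^ (a + b).val = (-1 : ℂ) ^ a.val * (-1 : ℂ) ^ b.val := by
  rcases (by decide : ∀ a : ZMod 2, a = 0 ∨ a = 1) a with rfl | rfl <;>
  rcases (by decide : ∀ a : ZMod 2, a = 0 ∨ a = 1) b with rfl | rfl <;>
    norm_num [show ZMod.val (2 : ZMod 2) = 0 by decide, show ZMod.val (1 : ZMod 2) = 1 by decide,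
      show ZMod.val (0 : ZMod 2) = 0 by decide]

lemma chi_add_right {n : ℕ} (w x y : Vv n) : chi w (x + y) = chi w x * chi w y := by
  unfold chi
  rw [show (∑ i, w i * (x + y) i) = (∑ i, w i * x i) + (∑ i, w i * y i) by
    rw [← Finset.sum_add_distrib]; exact Finset.sum_congr rfl fun i _ => by simp [mul_add]]
  exact neg_one_pow_val_add _ _

lemma conj_chi {n : ℕ} (w x : Vv n) : (starRingEnd ℂ) (chi w x) = chi w x := by
  unfold chi; rw [map_pow]; simp

lemma normfour (z : ℂ) : ((‖z‖ : ℝ) : ℂ)^4 = (z * (starRingEnd ℂ) z)^2 := by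
  rw [Complex.mul_conj, ← Complex.sq_norm]
  push_cast; ring

lemma orth {n : ℕ} (s : Vv n) : ∑ w : Vv n, chi w s = if s = 0 then (2:ℂ)^n else 0 := by
  by_cases hs : s = 0
  · subst hs
    simp [chi, Finset.card_univ]
  · simp only [hs, if_false]
    obtain ⟨i₀, hi₀⟩ : ∃ i, s i ≠ 0 := by
      by_contra h; push_neg at h; exact hs (funext fun i => h i)
    have hs1 : s i₀ = 1 := (by decide : ∀ a : ZMod 2, a ≠ 0 → a = 1) _ hi₀
    set δ : Vv n := Pi.single i₀ 1 with hδ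
    have key : ∀ w : Vv n, chi (w + δ) s = - chi w s := by
      intro w
      have hsum : (∑ i, (w + δ) i * s i) = (∑ i, w i * s i) + 1 := by
        simp only [Pi.add_apply, add_mul, Finset.sum_add_distrib]
        congr 1
        rw [Finset.sum_eq_single i₀]
        · simp [hδ, hs1]
        · intro b _ hb; simp [hδ, Pi.single_eq_of_ne hb]
        · simp
      unfold chi
      rw [hsum, neg_one_pow_val_add]
      norm_num [show ZMod.val (1 : ZMod 2) = 1 by decide]
    have h1 : ∑ w : Vv n, chi (w + δ) s = ∑ w : Vv n, chi w s :=
      Fintype.sum_equiv (Equiv.addRight δ) _ _ (fun w => rfl)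
    have h2 : ∑ w : Vv n, chi (w + δ) s = - ∑ w : Vv n, chi w s := by
      rw [← Finset.sum_neg_distrib]; exact Finset.sum_congr rfl fun w _ => key w
    have h3 : (2 : ℂ) * ∑ w : Vv n, chi w s = 0 := by linear_combination h1.symm.trans h2
    simpa using h3

lemma hcond {n : ℕ} (a b c d : Vv n) : a+b+c+d = 0 ↔ d = a+b+c := by
  rw [funext_iff, funext_iff]
  simp only [Pi.add_apply, Pi.zero_apply]
  exact forall_congr' fun i =>
    (by decide : ∀ w x y z : ZMod 2, (w+x+y+z = 0) ↔ z = w+x+y) _ _ _ _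

def e3 {n : ℕ} : (Vv n × Vv n × Vv n) ≃ (Vv n × Vv n × Vv n) where
  toFun t := (t.1, t.1 + t.2.1, t.1 + t.2.1 + t.2.2)
  invFun p := (p.1, p.1 + p.2.1, p.2.1 + p.2.2)
  left_inv := by
    rintro ⟨x, h, k⟩
    refine Prod.ext rfl (Prod.ext (funext fun i => ?_) (funext fun i => ?_)) <;>
      simp only [Pi.add_apply]
    · exact (by decide : ∀ a b : ZMod 2, a + (a + b) = b) _ _
    · exact (by decide : ∀ a b c : ZMod 2, (a + b) + (a + b + c) = c) _ _ _
  right_inv := by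
    rintro ⟨a, b, c⟩
    refine Prod.ext rfl (Prod.ext (funext fun i => ?_) (funext fun i => ?_)) <;>
      simp only [Pi.add_apply]
    · exact (by decide : ∀ a b : ZMod 2, a + (a + b) = b) _ _
    · exact (by decide : ∀ a b c : ZMod 2, a + (a + b) + (b + c) = c) _ _ _

lemma collapse {n : ℕ} (f : Vv n → ℂ) (N : ℂ) :
    ∑ q : (Vv n × Vv n) × (Vv n × Vv n),
      (f q.1.1 * (starRingEnd ℂ) (f q.1.2) * f q.2.1 * (starRingEnd ℂ) (f q.2.2))
        * (if q.1.1 + q.1.2 + q.2.1 + q.2.2 = 0 then N else 0)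
      = N * ∑ t : Vv n × Vv n × Vv n,
          f t.1 * (starRingEnd ℂ) (f (t.1+t.2.1)) * f (t.1+t.2.1+t.2.2)
            * (starRingEnd ℂ) (f (t.1+t.2.2)) := by
  have hR : (∑ t : Vv n × Vv n × Vv n,
        f t.1 * (starRingEnd ℂ) (f (t.1+t.2.1)) * f (t.1+t.2.1+t.2.2)
          * (starRingEnd ℂ) (f (t.1+t.2.2)))
      = ∑ p : Vv n × Vv n × Vv n,
          f p.1 * (starRingEnd ℂ) (f p.2.1) * f p.2.2 * (starRingEnd ℂ) (f (p.1+p.2.1+p.2.2)) := by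
    refine Fintype.sum_equiv e3 _ _ fun t => ?_
    have harg : t.1 + (t.1+t.2.1) + (t.1+t.2.1+t.2.2) = t.1 + t.2.2 := funext fun i => by
      simp only [Pi.add_apply]
      exact (by decide : ∀ a b c : ZMod 2, a + (a+b) + (a+b+c) = a+c) _ _ _
    simp only [e3, Equiv.coe_fn_mk, harg]
  rw [hR]
  simp only [Fintype.sum_prod_type, Finset.mul_sum]
  refine Finset.sum_congr rfl fun a _ => Finset.sum_congr rfl fun b _ =>
    Finset.sum_congr rfl fun c _ => ?_
  have key : ∀ d : Vv n, (f a * (starRingEnd ℂ) (f b) * f c * (starRingEnd ℂ) (f d))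
      * (if a + b + c + d = 0 then N else 0)
      = if d = a+b+c then (f a * (starRingEnd ℂ) (f b) * f c * (starRingEnd ℂ) (f d)) * N else 0 := by
    intro d
    rw [if_congr (hcond a b c d) rfl rfl, mul_ite, mul_zero]
  rw [Finset.sum_congr rfl fun d _ => key d, Finset.sum_ite_eq' univ (a+b+c)]
  simp [mul_comm]

lemma U2 {n : ℕ} (f : Vv n → ℂ) :
    ∑ w : Vv n, ((‖((2:ℂ)^n)⁻¹ * ∑ x : Vv n, f x * chi w x‖ : ℝ) : ℂ)^4
      = (((2:ℂ)^n)⁻¹)^3 * ∑ x : Vv n, ∑ h : Vv n, ∑ k : Vv n,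
          f x * (starRingEnd ℂ) (f (x+h)) * f (x+h+k) * (starRingEnd ℂ) (f (x+k)) := by
  set N : ℂ := (2:ℂ)^n with hNdef
  have hN : N ≠ 0 := pow_ne_zero _ two_ne_zero
  have step1 : ∀ w : Vv n,
      ((‖N⁻¹ * ∑ x : Vv n, f x * chi w x‖ : ℝ) : ℂ)^4
        = (N⁻¹)^4 * ∑ q : (Vv n × Vv n) × (Vv n × Vv n),
            (f q.1.1 * (starRingEnd ℂ) (f q.1.2) * f q.2.1 * (starRingEnd ℂ) (f q.2.2))
              * chi w (q.1.1 + q.1.2 + q.2.1 + q.2.2) := by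
    intro w
    rw [normfour]
    have hconj : (starRingEnd ℂ) (N⁻¹ * ∑ x : Vv n, f x * chi w x)
        = N⁻¹ * ∑ x : Vv n, (starRingEnd ℂ) (f x) * chi w x := by
      rw [map_mul, map_sum]
      congr 1
      · simp [hNdef, map_ofNat]
      · exact Finset.sum_congr rfl fun x _ => by rw [map_mul, conj_chi]
    rw [hconj]
    have e1 : (∑ x : Vv n, f x * chi w x) * (∑ x : Vv n, (starRingEnd ℂ) (f x) * chi w x)
        = ∑ p : Vv n × Vv n, (f p.1 * chi w p.1) * ((starRingEnd ℂ) (f p.2) * chi w p.2) := by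
      rw [← Finset.univ_product_univ, Finset.sum_product]
      exact Fintype.sum_mul_sum (fun x => f x * chi w x) (fun x => (starRingEnd ℂ) (f x) * chi w x)
    have e2 : (∑ p : Vv n × Vv n, (f p.1 * chi w p.1) * ((starRingEnd ℂ) (f p.2) * chi w p.2))^2
        = ∑ q : (Vv n × Vv n) × (Vv n × Vv n),
            ((f q.1.1 * chi w q.1.1) * ((starRingEnd ℂ) (f q.1.2) * chi w q.1.2))
              * ((f q.2.1 * chi w q.2.1) * ((starRingEnd ℂ) (f q.2.2) * chi w q.2.2)) := by
      conv_rhs => rw [← Finset.univ_product_univ, Finset.sum_product]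
      rw [sq]
      exact Fintype.sum_mul_sum (fun p : Vv n × Vv n => f p.1 * chi w p.1 * ((starRingEnd ℂ) (f p.2) * chi w p.2)) (fun p : Vv n × Vv n => f p.1 * chi w p.1 * ((starRingEnd ℂ) (f p.2) * chi w p.2))
    calc ((N⁻¹ * ∑ x : Vv n, f x * chi w x) * (N⁻¹ * ∑ x : Vv n, (starRingEnd ℂ) (f x) * chi w x))^2
        = (N⁻¹)^4 * ((∑ x : Vv n, f x * chi w x) * (∑ x : Vv n, (starRingEnd ℂ) (f x) * chi w x))^2 := by
          ring
      _ = (N⁻¹)^4 * ∑ q : (Vv n × Vv n) × (Vv n × Vv n),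
            ((f q.1.1 * chi w q.1.1) * ((starRingEnd ℂ) (f q.1.2) * chi w q.1.2))
              * ((f q.2.1 * chi w q.2.1) * ((starRingEnd ℂ) (f q.2.2) * chi w q.2.2)) := by
          rw [e1, e2]
      _ = (N⁻¹)^4 * ∑ q : (Vv n × Vv n) × (Vv n × Vv n),
            (f q.1.1 * (starRingEnd ℂ) (f q.1.2) * f q.2.1 * (starRingEnd ℂ) (f q.2.2))
              * chi w (q.1.1 + q.1.2 + q.2.1 + q.2.2) := by
          congr 1
          refine Finset.sum_congr rfl fun q _ => ?_
          rw [chi_add_right, chi_add_right, chi_add_right]; ring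
  calc ∑ w : Vv n, ((‖N⁻¹ * ∑ x : Vv n, f x * chi w x‖ : ℝ) : ℂ)^4
      = ∑ w : Vv n, (N⁻¹)^4 * ∑ q : (Vv n × Vv n) × (Vv n × Vv n),
          (f q.1.1 * (starRingEnd ℂ) (f q.1.2) * f q.2.1 * (starRingEnd ℂ) (f q.2.2))
            * chi w (q.1.1 + q.1.2 + q.2.1 + q.2.2) := Finset.sum_congr rfl fun w _ => step1 w
    _ = (N⁻¹)^4 * ∑ q : (Vv n × Vv n) × (Vv n × Vv n),
          (f q.1.1 * (starRingEnd ℂ) (f q.1.2) * f q.2.1 * (starRingEnd ℂ) (f q.2.2))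
            * ∑ w : Vv n, chi w (q.1.1 + q.1.2 + q.2.1 + q.2.2) := by
        rw [← Finset.mul_sum, Finset.sum_comm]
        congr 1
        exact Finset.sum_congr rfl fun q _ => (Finset.mul_sum _ _ _).symm
    _ = (N⁻¹)^4 * ∑ q : (Vv n × Vv n) × (Vv n × Vv n),
          (f q.1.1 * (starRingEnd ℂ) (f q.1.2) * f q.2.1 * (starRingEnd ℂ) (f q.2.2))
            * (if q.1.1 + q.1.2 + q.2.1 + q.2.2 = 0 then N else 0) := by
        congr 1; exact Finset.sum_congr rfl fun q _ => by rw [orth]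
    _ = (N⁻¹)^4 * (N * ∑ t : Vv n × Vv n × Vv n,
          f t.1 * (starRingEnd ℂ) (f (t.1+t.2.1)) * f (t.1+t.2.1+t.2.2)
            * (starRingEnd ℂ) (f (t.1+t.2.2))) := by rw [collapse]
    _ = (N⁻¹)^3 * ∑ t : Vv n × Vv n × Vv n,
          f t.1 * (starRingEnd ℂ) (f (t.1+t.2.1)) * f (t.1+t.2.1+t.2.2)
            * (starRingEnd ℂ) (f (t.1+t.2.2)) := by
        field_simp
    _ = (N⁻¹)^3 * ∑ x : Vv n, ∑ h : Vv n, ∑ k : Vv n,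
          f x * (starRingEnd ℂ) (f (x+h)) * f (x+h+k) * (starRingEnd ℂ) (f (x+k)) := by
        rw [Fintype.sum_prod_type]
        congr 1
        exact Finset.sum_congr rfl fun x _ => by rw [Fintype.sum_prod_type]

lemma pointwise {n : ℕ} (g : Vv n → ℂ) (v x h k : Vv n) :
    (∏ ω : ZMod 2 × ZMod 2 × ZMod 2,
      if Even ((ω.1).val + (ω.2.1).val + (ω.2.2).val) then
          g (x + ω.1 • v + ω.2.1 • h + ω.2.2 • k)
        else (starRingEnd ℂ) (g (x + ω.1 • v + ω.2.1 • h + ω.2.2 • k)))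
    = (g x * (starRingEnd ℂ) (g (x+v)))
        * (starRingEnd ℂ) (g (x+h) * (starRingEnd ℂ) (g (x+h+v)))
        * (g (x+h+k) * (starRingEnd ℂ) (g (x+h+k+v)))
        * (starRingEnd ℂ) (g (x+k) * (starRingEnd ℂ) (g (x+k+v))) := by
  rw [show (univ : Finset (ZMod 2 × ZMod 2 × ZMod 2)) =
      {(0,0,0),(0,0,1),(0,1,0),(0,1,1),(1,0,0),(1,0,1),(1,1,0),(1,1,1)} from by decide]
  rw [Finset.prod_insert (by decide), Finset.prod_insert (by decide),
    Finset.prod_insert (by decide), Finset.prod_insert (by decide),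
    Finset.prod_insert (by decide), Finset.prod_insert (by decide),
    Finset.prod_insert (by decide), Finset.prod_singleton]
  norm_num [show ZMod.val (0 : ZMod 2) = 0 by decide, show ZMod.val (1 : ZMod 2) = 1 by decide,
    zero_smul, one_smul]
  rw [add_right_comm x v h, add_right_comm x v k, add_right_comm (x+h) v k]
  ring

end Stmt0Aux

theorem stmt_0 (n : ℕ) (hn : 1 ≤ n) (g : (Fin n → ZMod 2) → ℂ) :
    (((2 : ℂ) ^ n)⁻¹) ^ 4 *
        ∑ x : Fin n → ZMod 2, ∑ h₁ : Fin n → ZMod 2, ∑ h₂ : Fin n → ZMod 2,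
          ∑ h₃ : Fin n → ZMod 2,
            ∏ ω : ZMod 2 × ZMod 2 × ZMod 2,
              (if Even ((ω.1).val + (ω.2.1).val + (ω.2.2).val) then
                  g (x + ω.1 • h₁ + ω.2.1 • h₂ + ω.2.2 • h₃)
                else
                  (starRingEnd ℂ) (g (x + ω.1 • h₁ + ω.2.1 • h₂ + ω.2.2 • h₃))) =
      ((2 : ℂ) ^ n)⁻¹ *
        ∑ v : Fin n → ZMod 2, ∑ w : Fin n → ZMod 2,
          (‖((2 : ℂ) ^ n)⁻¹ *
              ∑ x : Fin n → ZMod 2,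
                g x * (starRingEnd ℂ) (g (x + v)) *
                  (-1 : ℂ) ^ (∑ i, w i * x i : ZMod 2).val‖ : ℂ) ^ 4 := by
  have hN : ((2:ℂ)^n) ≠ 0 := pow_ne_zero _ two_ne_zero
  have key : ∀ v : Vv n,
      (∑ w : Vv n, ((‖((2:ℂ)^n)⁻¹ * ∑ x : Vv n,
          g x * (starRingEnd ℂ) (g (x + v)) * (-1 : ℂ) ^ (∑ i, w i * x i : ZMod 2).val‖ : ℝ) : ℂ)^4)
        = (((2:ℂ)^n)⁻¹)^3 * ∑ x : Vv n, ∑ h : Vv n, ∑ k : Vv n,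
            ∏ ω : ZMod 2 × ZMod 2 × ZMod 2,
              (if Even ((ω.1).val + (ω.2.1).val + (ω.2.2).val) then
                  g (x + ω.1 • v + ω.2.1 • h + ω.2.2 • k)
                else (starRingEnd ℂ) (g (x + ω.1 • v + ω.2.1 • h + ω.2.2 • k))) := by
    intro v
    have := U2 (n := n) (fun y => g y * (starRingEnd ℂ) (g (y + v)))
    simp only [chi] at this
    rw [this]
    congr 1
    refine Finset.sum_congr rfl fun x _ => Finset.sum_congr rfl fun h _ =>
      Finset.sum_congr rfl fun k _ => ?_
    exact (pointwise g v x h k).symm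
  calc (((2 : ℂ) ^ n)⁻¹) ^ 4 *
        ∑ x : Vv n, ∑ h₁ : Vv n, ∑ h₂ : Vv n, ∑ h₃ : Vv n,
            ∏ ω : ZMod 2 × ZMod 2 × ZMod 2,
              (if Even ((ω.1).val + (ω.2.1).val + (ω.2.2).val) then
                  g (x + ω.1 • h₁ + ω.2.1 • h₂ + ω.2.2 • h₃)
                else
                  (starRingEnd ℂ) (g (x + ω.1 • h₁ + ω.2.1 • h₂ + ω.2.2 • h₃)))
      = (((2 : ℂ) ^ n)⁻¹) ^ 4 *
        ∑ h₁ : Vv n, ∑ x : Vv n, ∑ h₂ : Vv n, ∑ h₃ : Vv n,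
            ∏ ω : ZMod 2 × ZMod 2 × ZMod 2,
              (if Even ((ω.1).val + (ω.2.1).val + (ω.2.2).val) then
                  g (x + ω.1 • h₁ + ω.2.1 • h₂ + ω.2.2 • h₃)
                else
                  (starRingEnd ℂ) (g (x + ω.1 • h₁ + ω.2.1 • h₂ + ω.2.2 • h₃))) := by
        exact congrArg _ Finset.sum_comm
    _ = ((2 : ℂ) ^ n)⁻¹ * ∑ v : Vv n, ∑ w : Vv n,
          (‖((2 : ℂ) ^ n)⁻¹ * ∑ x : Vv n,
              g x * (starRingEnd ℂ) (g (x + v)) *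
                (-1 : ℂ) ^ (∑ i, w i * x i : ZMod 2).val‖ : ℂ) ^ 4 := by
        rw [Finset.mul_sum, Finset.mul_sum]
        refine Finset.sum_congr rfl fun v _ => ?_
        rw [key v]
        ring
end

section
/- Let f be an amplitude vector with characteristic distribution p. Then: (a) ∑_{x ∈ 𝔽₂^{2n}} p(x) = 1; (b) p(0) = 2^{-n}; (c) 0 ≤ p(x) ≤ 2^{-n} for every x ∈ 𝔽₂^{2n}; and (d) the support {x ∈ 𝔽₂^{2n} : p(x) ≠ 0} has cardinality at least 2ⁿ. -/
open Finset

noncomputable def chic (a : ZMod 2) : ℂ := (-1) ^ a.val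

lemma chic_add (a b : ZMod 2) : chic (a + b) = chic a * chic b := by
  have h : ∀ a b : ZMod 2, (a + b).val = (a.val + b.val) % 2 := by decide
  simp only [chic, h, ← pow_add]
  rw [← Nat.mod_add_div (a.val + b.val) 2]
  simp [pow_add, pow_mul]

lemma chic_zero : chic 0 = 1 := by simp [chic]

lemma chic_one : chic 1 = -1 := by
  simp only [chic, show ZMod.val (1 : ZMod 2) = 1 from by decide]; norm_num

lemma chic_sum {ι : Type*} (s : Finset ι) (g : ι → ZMod 2) :
    chic (∑ i ∈ s, g i) = ∏ i ∈ s, chic (g i) := by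
  induction s using Finset.cons_induction with
  | empty => simp [chic_zero]
  | cons i s hi ih => rw [Finset.sum_cons, Finset.prod_cons, chic_add, ih]

lemma sum_zmod2 (g : ZMod 2 → ℂ) : ∑ a : ZMod 2, g a = g 0 + g 1 := by
  rw [show (Finset.univ : Finset (ZMod 2)) = {0, 1} from by decide]
  rw [Finset.sum_insert (by decide), Finset.sum_singleton]

lemma sum_chi (n : ℕ) (z : Fin n → ZMod 2) :
    ∑ w : Fin n → ZMod 2, chic (∑ i, w i * z i) = if z = 0 then (2 : ℂ) ^ n else 0 := by
  have h1 : ∀ w : Fin n → ZMod 2, chic (∑ i, w i * z i) = ∏ i, chic (w i * z i) :=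
    fun w => chic_sum _ _
  simp_rw [h1]
  have h2 := Finset.prod_univ_sum (fun _ : Fin n => (Finset.univ : Finset (ZMod 2)))
    (fun i a => chic (a * z i))
  rw [← Fintype.piFinset_univ, ← h2]
  by_cases hz : z = 0
  · simp [hz, chic_zero]
  · rw [if_neg hz]
    obtain ⟨i, hi⟩ := Function.ne_iff.mp hz
    apply Finset.prod_eq_zero (Finset.mem_univ i)
    have h3 : z i = 1 := by revert hi; have : ∀ a : ZMod 2, a ≠ 0 → a = 1 := by decide
                            exact this (z i)
    rw [h3, sum_zmod2]
    simp [chic_zero, chic_one]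

lemma chic_conj (a : ZMod 2) : (starRingEnd ℂ) (chic a) = chic a := by
  simp [chic]

lemma chic_norm (a : ZMod 2) : ‖chic a‖ = 1 := by
  simp [chic]

lemma pi_add_eq_zero_iff {n : ℕ} (y y' : Fin n → ZMod 2) : y + y' = 0 ↔ y' = y := by
  have hp : ∀ a b : ZMod 2, a + b = 0 ↔ b = a := by decide
  constructor
  · intro h; funext i; exact (hp _ _).mp (congrFun h i)
  · intro h; subst h; funext i; exact (hp _ _).mpr rfl

lemma parseval (n : ℕ) (f : (Fin n → ZMod 2) → ℂ) (v : Fin n → ZMod 2) :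
    ∑ w : Fin n → ZMod 2,
        ‖∑ y : Fin n → ZMod 2, f y * (starRingEnd ℂ) (f (y + v)) * chic (∑ i, w i * y i)‖ ^ 2
      = 2 ^ n * ∑ x : Fin n → ZMod 2, ‖f x‖ ^ 2 * ‖f (x + v)‖ ^ 2 := by
  set g : (Fin n → ZMod 2) → ℂ := fun y => f y * (starRingEnd ℂ) (f (y + v)) with hg
  set F : (Fin n → ZMod 2) → ℂ := fun w => ∑ y, g y * chic (∑ i, w i * y i) with hF
  have expand : ∀ w, F w * (starRingEnd ℂ) (F w)
      = ∑ y, ∑ y', g y * (starRingEnd ℂ) (g y') * chic (∑ i, w i * (y + y') i) := by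
    intro w
    rw [hF]
    simp only [map_sum, map_mul, chic_conj, Finset.sum_mul_sum]
    refine Finset.sum_congr rfl fun y _ => Finset.sum_congr rfl fun y' _ => ?_
    have : (∑ i, w i * y i) + (∑ i, w i * y' i) = ∑ i, w i * (y + y') i := by
      rw [← Finset.sum_add_distrib]
      exact Finset.sum_congr rfl fun i _ => by simp [mul_add]
    rw [← this, chic_add]; ring
  have hC : ∑ w, F w * (starRingEnd ℂ) (F w)
      = (2 : ℂ) ^ n * ∑ y, g y * (starRingEnd ℂ) (g y) := by
    simp_rw [expand]
    rw [Finset.sum_comm]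
    have : ∀ y : Fin n → ZMod 2, ∑ w : Fin n → ZMod 2, ∑ y',
        g y * (starRingEnd ℂ) (g y') * chic (∑ i, w i * (y + y') i)
        = (2:ℂ) ^ n * (g y * (starRingEnd ℂ) (g y)) := by
      intro y
      rw [Finset.sum_comm]
      have h2 : ∀ y' : Fin n → ZMod 2,
          ∑ w : Fin n → ZMod 2, g y * (starRingEnd ℂ) (g y') * chic (∑ i, w i * (y + y') i)
          = g y * (starRingEnd ℂ) (g y') * (if y' = y then (2:ℂ)^n else 0) := by
        intro y'
        rw [← Finset.mul_sum, sum_chi]; simp only [pi_add_eq_zero_iff]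
      simp_rw [h2, mul_ite, mul_zero]
      rw [Finset.sum_ite_eq' Finset.univ y
        (fun y' => g y * (starRingEnd ℂ) (g y') * (2:ℂ)^n)]
      simp [mul_comm]
    simp_rw [this]
    rw [← Finset.mul_sum]
  have hterm : ∀ w, F w * (starRingEnd ℂ) (F w) = ((‖F w‖ ^ 2 : ℝ) : ℂ) := by
    intro w; rw [Complex.mul_conj]; norm_cast
    rw [Complex.normSq_eq_norm_sq]
  have hterm2 : ∀ y, g y * (starRingEnd ℂ) (g y) = ((‖f y‖ ^ 2 * ‖f (y + v)‖ ^ 2 : ℝ) : ℂ) := by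
    intro y
    rw [Complex.mul_conj]
    rw [hg]
    simp only [Complex.normSq_mul, Complex.normSq_conj]
    push_cast
    rw [Complex.normSq_eq_norm_sq, Complex.normSq_eq_norm_sq]
    push_cast; ring
  simp_rw [hterm, hterm2] at hC
  exact_mod_cast hC
/-- The characteristic distribution of an amplitude vector `f : 𝔽₂ⁿ → ℂ`:
`p(v,w) = 2^{-n} · |∑_{x} f(x)·conj(f(x+v))·(-1)^{⟨w,x⟩}|²`. -/
noncomputable def charDist (n : ℕ) (f : (Fin n → ZMod 2) → ℂ) :
    (Fin n → ZMod 2) × (Fin n → ZMod 2) → ℝ :=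
  fun x =>
    ((2 : ℝ) ^ n)⁻¹ *
      ‖∑ y : Fin n → ZMod 2,
          f y * (starRingEnd ℂ) (f (y + x.1)) *
            (-1 : ℂ) ^ (∑ i, x.2 i * y i : ZMod 2).val‖ ^ 2

lemma charDist_eq (n : ℕ) (f : (Fin n → ZMod 2) → ℂ)
    (x : (Fin n → ZMod 2) × (Fin n → ZMod 2)) :
    charDist n f x = ((2 : ℝ) ^ n)⁻¹ *
      ‖∑ y : Fin n → ZMod 2,
          f y * (starRingEnd ℂ) (f (y + x.1)) * chic (∑ i, x.2 i * y i)‖ ^ 2 := rfl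

lemma shift_sum (n : ℕ) (f : (Fin n → ZMod 2) → ℂ) (v : Fin n → ZMod 2) :
    ∑ y : Fin n → ZMod 2, ‖f (y + v)‖ ^ 2 = ∑ y : Fin n → ZMod 2, ‖f y‖ ^ 2 :=
  Fintype.sum_equiv (Equiv.addRight v) _ _ (fun y => rfl)

/-- basic properties of the characteristic distribution. -/
theorem stmt_2 (n : ℕ) (hn : 1 ≤ n) (f : (Fin n → ZMod 2) → ℂ)
    (hf : ∑ x : Fin n → ZMod 2, ‖f x‖ ^ 2 = 1) :
    (∑ x : (Fin n → ZMod 2) × (Fin n → ZMod 2), charDist n f x = 1) ∧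
    charDist n f 0 = ((2 : ℝ) ^ n)⁻¹ ∧
    (∀ x : (Fin n → ZMod 2) × (Fin n → ZMod 2),
      0 ≤ charDist n f x ∧ charDist n f x ≤ ((2 : ℝ) ^ n)⁻¹) ∧
    2 ^ n ≤ Set.ncard {x : (Fin n → ZMod 2) × (Fin n → ZMod 2) | charDist n f x ≠ 0} := by
  have h2n : (0:ℝ) < (2:ℝ)^n := by positivity
  -- part (a)
  have ha : ∑ x : (Fin n → ZMod 2) × (Fin n → ZMod 2), charDist n f x = 1 := by
    rw [Fintype.sum_prod_type]
    have h1 : ∀ v, ∑ w, charDist n f (v, w)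
        = ∑ x : Fin n → ZMod 2, ‖f x‖ ^ 2 * ‖f (x + v)‖ ^ 2 := by
      intro v
      simp only [charDist_eq]
      rw [← Finset.mul_sum, parseval]
      field_simp
    simp_rw [h1]
    rw [Finset.sum_comm]
    have h2 : ∀ x : Fin n → ZMod 2,
        ∑ v : Fin n → ZMod 2, ‖f x‖ ^ 2 * ‖f (x + v)‖ ^ 2 = ‖f x‖ ^ 2 := by
      intro x
      rw [← Finset.mul_sum]
      have : ∑ v : Fin n → ZMod 2, ‖f (x + v)‖ ^ 2 = 1 :=
        (Fintype.sum_equiv (Equiv.addLeft x) (fun v => ‖f (x + v)‖ ^ 2)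
          (fun y => ‖f y‖ ^ 2) (fun v => rfl)).trans hf
      rw [this, mul_one]
    simp_rw [h2]
    exact hf
  -- part (b)
  have hb : charDist n f 0 = ((2 : ℝ) ^ n)⁻¹ := by
    rw [charDist_eq]
    have hx1 : (0 : (Fin n → ZMod 2) × (Fin n → ZMod 2)).1 = 0 := rfl
    have hx2 : (0 : (Fin n → ZMod 2) × (Fin n → ZMod 2)).2 = 0 := rfl
    rw [hx1, hx2]
    have hsum : ∑ y : Fin n → ZMod 2,
        f y * (starRingEnd ℂ) (f (y + 0)) * chic (∑ i, (0 : Fin n → ZMod 2) i * y i)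
        = ((1 : ℝ) : ℂ) := by
      have : ∀ y : Fin n → ZMod 2,
          f y * (starRingEnd ℂ) (f (y + 0)) * chic (∑ i, (0 : Fin n → ZMod 2) i * y i)
          = ((‖f y‖ ^ 2 : ℝ) : ℂ) := by
        intro y
        simp only [add_zero, Pi.zero_apply, zero_mul, Finset.sum_const_zero, chic_zero, mul_one]
        rw [Complex.mul_conj]
        norm_cast
        rw [Complex.normSq_eq_norm_sq]
      simp_rw [this]
      rw [← Complex.ofReal_sum, hf]
    rw [hsum]
    simp
  -- part (c)
  have hc : ∀ x : (Fin n → ZMod 2) × (Fin n → ZMod 2),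
      0 ≤ charDist n f x ∧ charDist n f x ≤ ((2 : ℝ) ^ n)⁻¹ := by
    intro ⟨v, w⟩
    constructor
    · exact mul_nonneg (by positivity) (sq_nonneg _)
    · rw [charDist_eq]
      have hb1 : ‖∑ y : Fin n → ZMod 2,
          f y * (starRingEnd ℂ) (f (y + v)) * chic (∑ i, w i * y i)‖
          ≤ ∑ y : Fin n → ZMod 2, ‖f y‖ * ‖f (y + v)‖ := by
        refine (norm_sum_le _ _).trans (le_of_eq (Finset.sum_congr rfl fun y _ => ?_))
        rw [norm_mul, norm_mul, chic_norm, mul_one, RCLike.norm_conj]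
      have hcs : (∑ y : Fin n → ZMod 2, ‖f y‖ * ‖f (y + v)‖) ^ 2 ≤ 1 := by
        calc (∑ y : Fin n → ZMod 2, ‖f y‖ * ‖f (y + v)‖) ^ 2
            ≤ (∑ y : Fin n → ZMod 2, ‖f y‖ ^ 2) * (∑ y : Fin n → ZMod 2, ‖f (y + v)‖ ^ 2) :=
              Finset.sum_mul_sq_le_sq_mul_sq _ _ _
          _ = 1 := by rw [hf, shift_sum n f v, hf, mul_one]
      have hnn : ‖∑ y : Fin n → ZMod 2,
          f y * (starRingEnd ℂ) (f (y + v)) * chic (∑ i, w i * y i)‖ ^ 2 ≤ 1 := by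
        calc _ ≤ (∑ y : Fin n → ZMod 2, ‖f y‖ * ‖f (y + v)‖) ^ 2 :=
              pow_le_pow_left₀ (norm_nonneg _) hb1 2
          _ ≤ 1 := hcs
      calc ((2 : ℝ) ^ n)⁻¹ * _ ≤ ((2 : ℝ) ^ n)⁻¹ * 1 := by
            exact mul_le_mul_of_nonneg_left hnn (by positivity)
        _ = ((2 : ℝ) ^ n)⁻¹ := mul_one _
  refine ⟨ha, hb, hc, ?_⟩
  -- part (d)
  classical
  set s : Finset ((Fin n → ZMod 2) × (Fin n → ZMod 2)) :=
    Finset.univ.filter (fun x => charDist n f x ≠ 0) with hs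
  have hset : {x : (Fin n → ZMod 2) × (Fin n → ZMod 2) | charDist n f x ≠ 0} = ↑s := by
    ext x; simp [hs]
  rw [hset, Set.ncard_coe_finset]
  have h1 : (1:ℝ) = ∑ x ∈ s, charDist n f x := by
    rw [hs, Finset.sum_filter_ne_zero, ha]
  have h2 : ∑ x ∈ s, charDist n f x ≤ s.card * ((2:ℝ)^n)⁻¹ := by
    calc ∑ x ∈ s, charDist n f x ≤ ∑ x ∈ s, ((2:ℝ)^n)⁻¹ :=
          Finset.sum_le_sum (fun x _ => (hc x).2)
      _ = s.card * ((2:ℝ)^n)⁻¹ := by rw [Finset.sum_const, nsmul_eq_mul]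
  have h3 : (2:ℝ)^n ≤ s.card := by
    have := h1 ▸ h2
    rw [← div_eq_mul_inv, le_div_iff₀ h2n] at this
    linarith
  exact_mod_cast h3
end

section
/- Let f be an amplitude vector with characteristic distribution p and Weyl distribution q. Then ∑_{x ∈ 𝔽₂^{2n}} q(x) · 2ⁿ · p(x) = 2^{2n} · ∑_{x ∈ 𝔽₂^{2n}} p(x)³. -/
open Finset

/-- The Weyl distribution `q(x) = ∑_y p(y)·p(x+y)`. -/
noncomputable def weylDist (n : ℕ) (f : (Fin n → ZMod 2) → ℂ) :
    (Fin n → ZMod 2) × (Fin n → ZMod 2) → ℝ :=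
  fun x => ∑ y : (Fin n → ZMod 2) × (Fin n → ZMod 2), charDist n f y * charDist n f (x + y)

namespace Stmt3Aux
variable {n : ℕ}

noncomputable def E (w y : Fin n → ZMod 2) : ℂ :=
  (-1) ^ (∑ i, w i * y i : ZMod 2).val

lemma neg_one_pow_val_add (s t : ZMod 2) :
    ((-1 : ℂ)) ^ (s + t).val = (-1) ^ s.val * (-1) ^ t.val := by
  rw [← pow_add, ZMod.val_add]
  exact (neg_one_pow_eq_pow_mod_two _).symm

lemma E_add_right (w y z : Fin n → ZMod 2) : E w (y + z) = E w y * E w z := by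
  unfold E
  rw [show (∑ i, w i * (y + z) i) = (∑ i, w i * y i) + (∑ i, w i * z i) by
    rw [← Finset.sum_add_distrib]
    exact Finset.sum_congr rfl fun i _ => by simp [mul_add]]
  exact neg_one_pow_val_add _ _

lemma E_add_left (w z y : Fin n → ZMod 2) : E (w + z) y = E w y * E z y := by
  unfold E
  rw [show (∑ i, (w + z) i * y i) = (∑ i, w i * y i) + (∑ i, z i * y i) by
    rw [← Finset.sum_add_distrib]
    exact Finset.sum_congr rfl fun i _ => by simp [add_mul]]
  exact neg_one_pow_val_add _ _

lemma E_symm (w y : Fin n → ZMod 2) : E w y = E y w := by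
  unfold E
  rw [show (∑ i, w i * y i) = ∑ i, y i * w i from
    Finset.sum_congr rfl fun i _ => mul_comm _ _]

lemma E_conj (w y : Fin n → ZMod 2) : (starRingEnd ℂ) (E w y) = E w y := by
  unfold E; rw [map_pow]; simp

lemma E_zero_right (w : Fin n → ZMod 2) : E w 0 = 1 := by
  simp [E]

lemma add_self_zero (y : Fin n → ZMod 2) : y + y = 0 := by
  funext i; exact CharTwo.add_self_eq_zero _

lemma sum_E (t : Fin n → ZMod 2) :
    ∑ w : Fin n → ZMod 2, E w t = if t = 0 then (2:ℂ)^n else 0 := by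
  by_cases ht : t = 0
  · subst ht
    simp [E_zero_right, Finset.card_univ]
  · simp only [ht, if_false]
    obtain ⟨i, hi⟩ : ∃ i, t i ≠ 0 := by
      by_contra h; push_neg at h; exact ht (funext h)
    set δ : Fin n → ZMod 2 := Pi.single i 1 with hδdef
    have key : ∑ w, E (w + δ) t = ∑ w : Fin n → ZMod 2, E w t :=
      Fintype.sum_equiv (Equiv.addRight δ) _ _ (fun x => rfl)
    have hδ : E δ t = -1 := by
      unfold E
      have h1 : (∑ j, δ j * t j) = t i := by
        simp [hδdef, Pi.single_apply, ite_mul]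
      have h2 : t i = 1 := by
        have : ∀ s : ZMod 2, s ≠ 0 → s = 1 := by decide
        exact this _ hi
      rw [h1, h2]
      norm_num [ZMod.val_one]
    have key2 : ∑ w, E (w + δ) t = -∑ w : Fin n → ZMod 2, E w t := by
      rw [← Finset.sum_neg_distrib]
      exact Finset.sum_congr rfl fun w _ => by rw [E_add_left, hδ]; ring
    have hS := key.symm.trans key2
    have h2 : (2:ℂ) * ∑ w : Fin n → ZMod 2, E w t = 0 := by
      rw [two_mul]; linear_combination hS
    exact (mul_eq_zero.mp h2).resolve_left two_ne_zero

lemma cond_iff {A : Type*} [AddCommGroup A] (hA : ∀ a : A, a + a = 0)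
    (x y b : A) : x + y + b = 0 ↔ y = x + b := by
  constructor
  · intro h
    have h1 : y + (x + b) = 0 := by rw [← h]; abel
    have h2 : y = -(x + b) := eq_neg_of_add_eq_zero_left h1
    rw [h2, neg_eq_of_add_eq_zero_left (hA (x + b))]
  · rintro rfl
    calc x + (x + b) + b = (x + x) + (b + b) := by abel
    _ = 0 := by rw [hA, hA, add_zero]

noncomputable def g (f : (Fin n → ZMod 2) → ℂ)
    (x : (Fin n → ZMod 2) × (Fin n → ZMod 2)) : ℂ :=
  ∑ y, f y * (starRingEnd ℂ) (f (y + x.1)) * E x.2 y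

lemma g_apply (f : (Fin n → ZMod 2) → ℂ) (v w : Fin n → ZMod 2) :
    g f (v, w) = ∑ y, f y * (starRingEnd ℂ) (f (y + v)) * E w y := rfl

lemma g_conj (f : (Fin n → ZMod 2) → ℂ) (v w : Fin n → ZMod 2) :
    (starRingEnd ℂ) (g f (v, w)) =
      ∑ y, (starRingEnd ℂ) (f y) * f (y + v) * E w y := by
  rw [g_apply, map_sum]
  exact Finset.sum_congr rfl fun y _ => by
    rw [map_mul, map_mul, E_conj, Complex.conj_conj]

lemma charDist_cast (f : (Fin n → ZMod 2) → ℂ)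
    (x : (Fin n → ZMod 2) × (Fin n → ZMod 2)) :
    ((charDist n f x : ℝ) : ℂ) = ((2:ℂ)^n)⁻¹ * (g f x * (starRingEnd ℂ) (g f x)) := by
  rw [Complex.mul_conj, Complex.normSq_eq_norm_sq]
  unfold charDist g E
  push_cast
  ring


lemma lemA (f : (Fin n → ZMod 2) → ℂ) (a b : Fin n → ZMod 2) :
    ∑ x : (Fin n → ZMod 2) × (Fin n → ZMod 2),
        ((charDist n f x : ℝ) : ℂ) * (E a x.1 * E b x.2) =
      (2:ℂ)^n * ((charDist n f (b, a) : ℝ) : ℂ) := by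
  have h2n : (2:ℂ)^n ≠ 0 := pow_ne_zero _ two_ne_zero
  have hRHS : (2:ℂ)^n * ((charDist n f (b, a) : ℝ) : ℂ) =
      ∑ x, ∑ u, (f x * (starRingEnd ℂ) (f (x + b)) * E a x) *
        ((starRingEnd ℂ) (f u) * f (u + b) * E a u) := by
    rw [charDist_cast, g_conj, g_apply, ← mul_assoc, mul_inv_cancel₀ h2n, one_mul,
      Finset.sum_mul_sum]
  rw [hRHS]
  calc
    ∑ x : (Fin n → ZMod 2) × (Fin n → ZMod 2),
        ((charDist n f x : ℝ) : ℂ) * (E a x.1 * E b x.2)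
      = ∑ v, ∑ w, ((2:ℂ)^n)⁻¹ * (g f (v, w) * (starRingEnd ℂ) (g f (v, w))) *
          (E a v * E w b) := by
        rw [Fintype.sum_prod_type]
        exact Finset.sum_congr rfl fun v _ => Finset.sum_congr rfl fun w _ => by
          rw [charDist_cast, E_symm b w]
    _ = ∑ v, ∑ w, ∑ x, ∑ y,
          (((2:ℂ)^n)⁻¹ * (f x * (starRingEnd ℂ) (f (x + v)) *
            ((starRingEnd ℂ) (f y) * f (y + v))) * E a v) *
          (E w x * E w y * E w b) := by
        refine Finset.sum_congr rfl fun v _ => Finset.sum_congr rfl fun w _ => ?_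
        rw [g_conj, g_apply, Finset.sum_mul_sum]
        simp only [Finset.mul_sum, Finset.sum_mul]
        exact Finset.sum_congr rfl fun x _ => Finset.sum_congr rfl fun y _ => by ring
    _ = ∑ v, ∑ x, ∑ y, ∑ w,
          (((2:ℂ)^n)⁻¹ * (f x * (starRingEnd ℂ) (f (x + v)) *
            ((starRingEnd ℂ) (f y) * f (y + v))) * E a v) *
          (E w x * E w y * E w b) := by
        refine Finset.sum_congr rfl fun v _ => ?_
        rw [Finset.sum_comm]
        exact Finset.sum_congr rfl fun x _ => Finset.sum_comm
    _ = ∑ v, ∑ x, ∑ y,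
          (((2:ℂ)^n)⁻¹ * (f x * (starRingEnd ℂ) (f (x + v)) *
            ((starRingEnd ℂ) (f y) * f (y + v))) * E a v) *
          (if x + y + b = 0 then (2:ℂ)^n else 0) := by
        refine Finset.sum_congr rfl fun v _ => Finset.sum_congr rfl fun x _ =>
          Finset.sum_congr rfl fun y _ => ?_
        rw [← Finset.mul_sum,
          show (∑ w, E w x * E w y * E w b) = ∑ w : Fin n → ZMod 2, E w (x + y + b) from
            Finset.sum_congr rfl fun w _ => by rw [E_add_right, E_add_right],
          sum_E]
    _ = ∑ v, ∑ x,
          (((2:ℂ)^n)⁻¹ * (f x * (starRingEnd ℂ) (f (x + v)) *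
            ((starRingEnd ℂ) (f (x + b)) * f (x + b + v))) * E a v) * (2:ℂ)^n := by
        refine Finset.sum_congr rfl fun v _ => Finset.sum_congr rfl fun x _ => ?_
        rw [Finset.sum_eq_single_of_mem (x + b) (Finset.mem_univ _)
          (fun y _ hy => by
            rw [if_neg fun h => hy ((cond_iff add_self_zero x y b).mp h), mul_zero]),
          if_pos ((cond_iff add_self_zero x (x + b) b).mpr rfl)]
    _ = ∑ v, ∑ x,
          f x * (starRingEnd ℂ) (f (x + v)) *
            ((starRingEnd ℂ) (f (x + b)) * f (x + b + v)) * E a v := by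
        refine Finset.sum_congr rfl fun v _ => Finset.sum_congr rfl fun x _ => ?_
        field_simp
    _ = ∑ x, ∑ v,
          f x * (starRingEnd ℂ) (f (x + v)) *
            ((starRingEnd ℂ) (f (x + b)) * f (x + b + v)) * E a v := Finset.sum_comm
    _ = ∑ x, ∑ u, (f x * (starRingEnd ℂ) (f (x + b)) * E a x) *
          ((starRingEnd ℂ) (f u) * f (u + b) * E a u) := by
        refine Finset.sum_congr rfl fun x _ => ?_
        refine Fintype.sum_equiv (Equiv.addLeft x) _ _ fun u => ?_
        have hx : E a x * E a x = 1 := by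
          rw [← E_add_right, add_self_zero, E_zero_right]
        show f x * (starRingEnd ℂ) (f (x + u)) *
            ((starRingEnd ℂ) (f (x + b)) * f (x + b + u)) * E a u =
          f x * (starRingEnd ℂ) (f (x + b)) * E a x *
            ((starRingEnd ℂ) (f (x + u)) * f (x + u + b) * E a (x + u))
        rw [E_add_right, show x + u + b = x + b + u from by abel]
        linear_combination (-(f x * (starRingEnd ℂ) (f (x + u)) *
          ((starRingEnd ℂ) (f (x + b)) * f (x + b + u)) * E a u)) * hx
end Stmt3Aux

namespace Stmt3Aux

lemma add_self_zero2 (t : (Fin n → ZMod 2) × (Fin n → ZMod 2)) : t + t = 0 := by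
  rw [Prod.ext_iff]
  exact ⟨add_self_zero _, add_self_zero _⟩

lemma sum_E2 (t : (Fin n → ZMod 2) × (Fin n → ZMod 2)) :
    ∑ u : (Fin n → ZMod 2) × (Fin n → ZMod 2), E u.1 t.1 * E u.2 t.2 =
      if t = 0 then (2:ℂ)^(2*n) else 0 := by
  obtain ⟨t1, t2⟩ := t
  rw [Fintype.sum_prod_type]
  dsimp only
  rw [← Finset.sum_mul_sum, sum_E, sum_E]
  by_cases h1 : t1 = 0 <;> by_cases h2 : t2 = 0 <;>
    simp [h1, h2, two_mul, pow_add, Prod.ext_iff]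
end Stmt3Aux


open Stmt3Aux in
/-- `∑_x q(x)·2ⁿ·p(x) = 2^{2n} · ∑_x p(x)³`. -/
theorem stmt_3 (n : ℕ) (hn : 1 ≤ n) (f : (Fin n → ZMod 2) → ℂ)
    (hf : ∑ x : Fin n → ZMod 2, ‖f x‖ ^ 2 = 1) :
    ∑ x : (Fin n → ZMod 2) × (Fin n → ZMod 2),
        weylDist n f x * ((2 : ℝ) ^ n * charDist n f x) =
      (2 : ℝ) ^ (2 * n) *
        ∑ x : (Fin n → ZMod 2) × (Fin n → ZMod 2), (charDist n f x) ^ 3 := by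
  set P : (Fin n → ZMod 2) × (Fin n → ZMod 2) → ℂ :=
    fun x => ((charDist n f x : ℝ) : ℂ) with hP
  have h2n2 : ((2:ℂ)^(2*n)) ≠ 0 := pow_ne_zero _ two_ne_zero
  have cube : ∀ u : (Fin n → ZMod 2) × (Fin n → ZMod 2),
      (∑ x : (Fin n → ZMod 2) × (Fin n → ZMod 2),
        P x * (E u.1 x.1 * E u.2 x.2)) = (2:ℂ)^n * P (u.2, u.1) :=
    fun u => lemA f u.1 u.2
  have hswap : ∑ u : (Fin n → ZMod 2) × (Fin n → ZMod 2),
      P (u.2, u.1) * P (u.2, u.1) * P (u.2, u.1) =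
      ∑ x : (Fin n → ZMod 2) × (Fin n → ZMod 2), P x * P x * P x :=
    Fintype.sum_equiv (Equiv.prodComm _ _) _ _ (fun u => rfl)
  have key1 : ∑ u : (Fin n → ZMod 2) × (Fin n → ZMod 2),
      ((2:ℂ)^n * P (u.2, u.1)) * ((2:ℂ)^n * P (u.2, u.1)) * ((2:ℂ)^n * P (u.2, u.1)) =
      (∑ x : (Fin n → ZMod 2) × (Fin n → ZMod 2),
        ∑ y : (Fin n → ZMod 2) × (Fin n → ZMod 2),
          P x * P y * P (x + y)) * (2:ℂ)^(2*n) := by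
    calc
      ∑ u : (Fin n → ZMod 2) × (Fin n → ZMod 2),
          ((2:ℂ)^n * P (u.2, u.1)) * ((2:ℂ)^n * P (u.2, u.1)) * ((2:ℂ)^n * P (u.2, u.1))
        = ∑ u : (Fin n → ZMod 2) × (Fin n → ZMod 2),
            ∑ x : (Fin n → ZMod 2) × (Fin n → ZMod 2),
            ∑ y : (Fin n → ZMod 2) × (Fin n → ZMod 2),
            ∑ z : (Fin n → ZMod 2) × (Fin n → ZMod 2),
            (P x * P y * P z) * (E u.1 ((x + y + z).1) * E u.2 ((x + y + z).2)) := by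
          refine Finset.sum_congr rfl fun u _ => ?_
          rw [← cube u]
          simp only [Finset.sum_mul_sum, Finset.sum_mul, Finset.mul_sum]
          refine Finset.sum_congr rfl fun x _ => Finset.sum_congr rfl fun y _ =>
            Finset.sum_congr rfl fun z _ => ?_
          rw [show (x + y + z).1 = x.1 + y.1 + z.1 from rfl,
            show (x + y + z).2 = x.2 + y.2 + z.2 from rfl,
            E_add_right, E_add_right, E_add_right, E_add_right]
          ring
      _ = ∑ x : (Fin n → ZMod 2) × (Fin n → ZMod 2),
            ∑ y : (Fin n → ZMod 2) × (Fin n → ZMod 2),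
            ∑ z : (Fin n → ZMod 2) × (Fin n → ZMod 2),
            ∑ u : (Fin n → ZMod 2) × (Fin n → ZMod 2),
            (P x * P y * P z) * (E u.1 ((x + y + z).1) * E u.2 ((x + y + z).2)) := by
          rw [Finset.sum_comm]
          refine Finset.sum_congr rfl fun x _ => ?_
          rw [Finset.sum_comm]
          exact Finset.sum_congr rfl fun y _ => Finset.sum_comm
      _ = ∑ x : (Fin n → ZMod 2) × (Fin n → ZMod 2),
            ∑ y : (Fin n → ZMod 2) × (Fin n → ZMod 2),
            ∑ z : (Fin n → ZMod 2) × (Fin n → ZMod 2),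
            (P x * P y * P z) * (if x + y + z = 0 then (2:ℂ)^(2*n) else 0) := by
          refine Finset.sum_congr rfl fun x _ => Finset.sum_congr rfl fun y _ =>
            Finset.sum_congr rfl fun z _ => ?_
          rw [← Finset.mul_sum, sum_E2]
      _ = ∑ x : (Fin n → ZMod 2) × (Fin n → ZMod 2),
            ∑ y : (Fin n → ZMod 2) × (Fin n → ZMod 2),
            (P x * P y * P (x + y)) * (2:ℂ)^(2*n) := by
          refine Finset.sum_congr rfl fun x _ => Finset.sum_congr rfl fun y _ => ?_
          rw [Finset.sum_eq_single_of_mem (x + y) (Finset.mem_univ _)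
            (fun z _ hz => by
              rw [if_neg fun h => hz ((cond_iff add_self_zero2 x z y).mp
                (by rw [show x + z + y = x + y + z from by abel]; exact h)),
                mul_zero]),
            if_pos (by
              rw [show x + y + (x + y) = 0 ↔ True from
                iff_of_eq (eq_true (add_self_zero2 (x + y)))]; trivial)]
      _ = (∑ x : (Fin n → ZMod 2) × (Fin n → ZMod 2),
            ∑ y : (Fin n → ZMod 2) × (Fin n → ZMod 2),
            P x * P y * P (x + y)) * (2:ℂ)^(2*n) := by
          rw [Finset.sum_mul]
          exact Finset.sum_congr rfl fun x _ => by rw [Finset.sum_mul]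
  have e1 : ∑ u : (Fin n → ZMod 2) × (Fin n → ZMod 2),
      ((2:ℂ)^n * P (u.2, u.1)) * ((2:ℂ)^n * P (u.2, u.1)) * ((2:ℂ)^n * P (u.2, u.1)) =
      ((2:ℂ)^n * ∑ x : (Fin n → ZMod 2) × (Fin n → ZMod 2), P x * P x * P x) *
        (2:ℂ)^(2*n) := by
    calc
      ∑ u : (Fin n → ZMod 2) × (Fin n → ZMod 2),
          ((2:ℂ)^n * P (u.2, u.1)) * ((2:ℂ)^n * P (u.2, u.1)) * ((2:ℂ)^n * P (u.2, u.1))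
        = ∑ u : (Fin n → ZMod 2) × (Fin n → ZMod 2),
            ((2:ℂ)^n * (2:ℂ)^(2*n)) * (P (u.2, u.1) * P (u.2, u.1) * P (u.2, u.1)) := by
          refine Finset.sum_congr rfl fun u _ => ?_
          rw [two_mul, pow_add]; ring
      _ = ((2:ℂ)^n * (2:ℂ)^(2*n)) *
            ∑ u : (Fin n → ZMod 2) × (Fin n → ZMod 2),
              P (u.2, u.1) * P (u.2, u.1) * P (u.2, u.1) := by
          rw [Finset.mul_sum]
      _ = ((2:ℂ)^n * ∑ x : (Fin n → ZMod 2) × (Fin n → ZMod 2), P x * P x * P x) *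
            (2:ℂ)^(2*n) := by rw [hswap]; ring
  have hT : ∑ x : (Fin n → ZMod 2) × (Fin n → ZMod 2),
      ∑ y : (Fin n → ZMod 2) × (Fin n → ZMod 2), P x * P y * P (x + y) =
      (2:ℂ)^n * ∑ x : (Fin n → ZMod 2) × (Fin n → ZMod 2), P x * P x * P x :=
    mul_right_cancel₀ h2n2 (key1.symm.trans e1)
  -- now the complex version of the goal
  have ckey : ∑ x : (Fin n → ZMod 2) × (Fin n → ZMod 2),
      (∑ y : (Fin n → ZMod 2) × (Fin n → ZMod 2), P y * P (x + y)) * ((2:ℂ)^n * P x) =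
      (2:ℂ)^(2*n) * ∑ x : (Fin n → ZMod 2) × (Fin n → ZMod 2), P x ^ 3 := by
    calc
      ∑ x : (Fin n → ZMod 2) × (Fin n → ZMod 2),
          (∑ y : (Fin n → ZMod 2) × (Fin n → ZMod 2), P y * P (x + y)) * ((2:ℂ)^n * P x)
        = (∑ x : (Fin n → ZMod 2) × (Fin n → ZMod 2),
            ∑ y : (Fin n → ZMod 2) × (Fin n → ZMod 2), P x * P y * P (x + y)) * (2:ℂ)^n := by
          rw [Finset.sum_mul]
          refine Finset.sum_congr rfl fun x _ => ?_
          rw [Finset.sum_mul, Finset.sum_mul]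
          exact Finset.sum_congr rfl fun y _ => by ring
      _ = ((2:ℂ)^n * ∑ x : (Fin n → ZMod 2) × (Fin n → ZMod 2), P x * P x * P x) *
            (2:ℂ)^n := by rw [hT]
      _ = (2:ℂ)^(2*n) * ∑ x : (Fin n → ZMod 2) × (Fin n → ZMod 2), P x ^ 3 := by
          rw [two_mul, pow_add,
            show (∑ x : (Fin n → ZMod 2) × (Fin n → ZMod 2), P x ^ 3) =
              ∑ x : (Fin n → ZMod 2) × (Fin n → ZMod 2), P x * P x * P x from
              Finset.sum_congr rfl fun x _ => by ring]
          ring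
  rw [← Complex.ofReal_inj]
  simp only [weylDist]
  push_cast
  exact ckey
end

section
/- Let f be an amplitude vector with characteristic distribution p and let γ ∈ [0,1]. If 2ⁿ · ∑_{x ∈ 𝔽₂^{2n}} p(x)² ≥ γ (i.e., the eighth power of the Gowers-3 norm of the state is at least γ), then 2ⁿ · ∑_{x,y ∈ 𝔽₂^{2n}} p(x) · p(y) · p(x+y) ≥ γ². -/
open Finset

namespace Stmt5Aux

noncomputable def sgn (s : ZMod 2) : ℝ := (-1 : ℝ) ^ s.val

lemma val2 : ZMod.val (2 : ZMod 2) = 0 := rfl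
lemma val1 : ZMod.val (1 : ZMod 2) = 1 := rfl
lemma val0 : ZMod.val (0 : ZMod 2) = 0 := rfl

lemma sgn_add (s t : ZMod 2) : sgn (s + t) = sgn s * sgn t := by
  have key : ∀ s t : ZMod 2, (s + t).val % 2 = (s.val + t.val) % 2 := by decide
  simp only [sgn]
  rw [← pow_add, neg_one_pow_eq_pow_mod_two, key, ← neg_one_pow_eq_pow_mod_two]

lemma sgn_zero : sgn 0 = 1 := by simp [sgn, val0]
lemma sgn_one : sgn 1 = -1 := by simp [sgn, val1]

def D (n : ℕ) (w y : Fin n → ZMod 2) : ZMod 2 := ∑ i, w i * y i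

lemma D_symm (n : ℕ) (w y : Fin n → ZMod 2) : D n w y = D n y w := by
  simp [D, mul_comm]

lemma D_add_right (n : ℕ) (w y z : Fin n → ZMod 2) :
    D n w (y + z) = D n w y + D n w z := by
  simp [D, mul_add, Finset.sum_add_distrib]

lemma D_add_left (n : ℕ) (w w' y : Fin n → ZMod 2) :
    D n (w + w') y = D n w y + D n w' y := by
  simp [D, add_mul, Finset.sum_add_distrib]

lemma D_zero_right (n : ℕ) (w : Fin n → ZMod 2) : D n w 0 = 0 := by simp [D]

lemma orthR (n : ℕ) (z : Fin n → ZMod 2) :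
    (∑ w : Fin n → ZMod 2, sgn (D n w z)) = if z = 0 then (2 : ℝ) ^ n else 0 := by
  by_cases hz : z = 0
  · subst hz
    simp [D_zero_right, sgn_zero, Finset.card_univ]
  · simp only [if_neg hz]
    obtain ⟨i, hi⟩ : ∃ i, z i ≠ 0 := by
      by_contra hc
      push_neg at hc
      exact hz (funext fun i => hc i)
    have hzi : z i = 1 := by
      have : ∀ s : ZMod 2, s ≠ 0 → s = 1 := by decide
      exact this _ hi
    set δ : Fin n → ZMod 2 := fun j => if j = i then 1 else 0 with hδ
    have hDδ : D n δ z = 1 := by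
      simp only [D, hδ]
      rw [Finset.sum_eq_single i]
      · simp [hzi]
      · intro b _ hb; simp [if_neg hb]
      · intro hmem; exact absurd (Finset.mem_univ i) hmem
    have key : (∑ w : Fin n → ZMod 2, sgn (D n w z))
        = ∑ w : Fin n → ZMod 2, sgn (D n (w + δ) z) :=
      (Fintype.sum_equiv (Equiv.addRight δ) _ _ (fun w => rfl)).symm
    have : (∑ w : Fin n → ZMod 2, sgn (D n w z))
        = -∑ w : Fin n → ZMod 2, sgn (D n w z) := by
      nth_rewrite 1 [key]
      rw [← Finset.sum_neg_distrib]
      refine Finset.sum_congr rfl fun w _ => ?_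
      rw [D_add_left, sgn_add, hDδ, sgn_one]; ring
    linarith


noncomputable def E (s : ZMod 2) : ℂ := ((sgn s : ℝ) : ℂ)

lemma E_add (s t : ZMod 2) : E (s + t) = E s * E t := by
  simp [E, sgn_add]

lemma E_zero : E 0 = 1 := by simp [E, sgn_zero]

lemma conj_E (s : ZMod 2) : (starRingEnd ℂ) (E s) = E s := Complex.conj_ofReal _

lemma orthC (n : ℕ) (z : Fin n → ZMod 2) :
    (∑ w : Fin n → ZMod 2, E (D n w z)) = if z = 0 then (2 : ℂ) ^ n else 0 := by
  have := orthR n z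
  have h2 : (∑ w : Fin n → ZMod 2, E (D n w z))
      = ((∑ w : Fin n → ZMod 2, sgn (D n w z) : ℝ) : ℂ) := by
    push_cast [E]; rfl
  rw [h2, this]
  split <;> push_cast <;> ring

lemma addself {n : ℕ} (a : Fin n → ZMod 2) : a + a = 0 := by
  funext i
  have : ∀ s : ZMod 2, s + s = 0 := by decide
  exact this _

/-- complex amplitude sum -/
noncomputable def Fc (n : ℕ) (f : (Fin n → ZMod 2) → ℂ)
    (x : (Fin n → ZMod 2) × (Fin n → ZMod 2)) : ℂ :=
  ∑ y, f y * (starRingEnd ℂ) (f (y + x.1)) * E (D n x.2 y)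

lemma conj_Fc (n : ℕ) (f : (Fin n → ZMod 2) → ℂ)
    (x : (Fin n → ZMod 2) × (Fin n → ZMod 2)) :
    (starRingEnd ℂ) (Fc n f x)
      = ∑ y, (starRingEnd ℂ) (f y) * f (y + x.1) * E (D n x.2 y) := by
  rw [Fc, map_sum]
  refine Finset.sum_congr rfl fun y _ => ?_
  rw [map_mul, map_mul, conj_E, RingHomInvPair.comp_apply_eq]

lemma E_val (s : ZMod 2) : E s = (-1 : ℂ) ^ s.val := by
  simp [E, sgn]


lemma dualC (n : ℕ) (f : (Fin n → ZMod 2) → ℂ)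
    (c : (Fin n → ZMod 2) × (Fin n → ZMod 2)) :
    ∑ x : (Fin n → ZMod 2) × (Fin n → ZMod 2),
        Fc n f x * (starRingEnd ℂ) (Fc n f x) * E (D n c.1 x.1 + D n c.2 x.2)
      = (2 : ℂ) ^ n * (Fc n f (c.2, c.1) * (starRingEnd ℂ) (Fc n f (c.2, c.1))) := by
  set cj := (starRingEnd ℂ)
  -- inner computation for fixed v
  have inner : ∀ v : Fin n → ZMod 2,
      (∑ w : Fin n → ZMod 2, Fc n f (v, w) * cj (Fc n f (v, w)) * E (D n c.1 v + D n c.2 w))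
      = (2:ℂ)^n * ∑ x, f x * cj (f (x + v)) * cj (f (x + c.2)) * f (x + c.2 + v)
          * E (D n c.1 v) := by
    intro v
    have expand : ∀ w, Fc n f (v, w) * cj (Fc n f (v, w)) * E (D n c.1 v + D n c.2 w)
        = ∑ x, ∑ y, (f x * cj (f (x + v)) * cj (f y) * f (y + v) * E (D n c.1 v))
            * E (D n w (x + y + c.2)) := by
      intro w
      rw [conj_Fc, Fc, Finset.sum_mul_sum, Finset.sum_mul]
      refine Finset.sum_congr rfl fun x _ => ?_
      rw [Finset.sum_mul]
      refine Finset.sum_congr rfl fun y _ => ?_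
      have hsplit : E (D n w (x + y + c.2)) = E (D n w x) * E (D n w y) * E (D n c.2 w) := by
        rw [D_add_right, D_add_right, E_add, E_add, D_symm n w c.2]
      rw [hsplit, E_add]
      dsimp only
      ring
    calc (∑ w, Fc n f (v, w) * cj (Fc n f (v, w)) * E (D n c.1 v + D n c.2 w))
        = ∑ w, ∑ x, ∑ y, (f x * cj (f (x + v)) * cj (f y) * f (y + v) * E (D n c.1 v))
            * E (D n w (x + y + c.2)) := Finset.sum_congr rfl fun w _ => expand w
      _ = ∑ x, ∑ y, ∑ w : Fin n → ZMod 2,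
            (f x * cj (f (x + v)) * cj (f y) * f (y + v) * E (D n c.1 v))
            * E (D n w (x + y + c.2)) := by
          rw [Finset.sum_comm]
          exact Finset.sum_congr rfl fun x _ => Finset.sum_comm
      _ = ∑ x, ∑ y, (f x * cj (f (x + v)) * cj (f y) * f (y + v) * E (D n c.1 v))
            * (if x + y + c.2 = 0 then (2:ℂ)^n else 0) := by
          refine Finset.sum_congr rfl fun x _ => Finset.sum_congr rfl fun y _ => ?_
          rw [← Finset.mul_sum, orthC]
      _ = ∑ x, ∑ y, (if y = x + c.2 then
            (2:ℂ)^n * (f x * cj (f (x + v)) * cj (f y) * f (y + v) * E (D n c.1 v)) else 0) := by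
          refine Finset.sum_congr rfl fun x _ => Finset.sum_congr rfl fun y _ => ?_
          have hiff : x + y + c.2 = 0 ↔ y = x + c.2 := by
            constructor
            · intro h
              calc y = x + y + c.2 + (x + c.2) := by
                    rw [show x + y + c.2 + (x + c.2) = (x + x) + (c.2 + c.2) + y by ring,
                      addself, addself]
                    simp
                _ = x + c.2 := by rw [h, zero_add]
            · intro h
              rw [h]
              calc x + (x + c.2) + c.2 = (x + x) + (c.2 + c.2) := by ring
                _ = 0 := by rw [addself, addself, add_zero]
          by_cases hy : y = x + c.2
          · rw [if_pos hy, if_pos (hiff.mpr hy)]; ring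
          · rw [if_neg hy, if_neg (fun hc => hy (hiff.mp hc)), mul_zero]
      _ = ∑ x, (2:ℂ)^n * (f x * cj (f (x + v)) * cj (f (x + c.2)) * f ((x + c.2) + v)
            * E (D n c.1 v)) := by
          refine Finset.sum_congr rfl fun x _ => ?_
          rw [Finset.sum_ite_eq' univ (x + c.2)]
          simp
      _ = (2:ℂ)^n * ∑ x, f x * cj (f (x + v)) * cj (f (x + c.2)) * f (x + c.2 + v)
            * E (D n c.1 v) := by rw [← Finset.mul_sum]
  -- outer computation
  calc ∑ x : (Fin n → ZMod 2) × (Fin n → ZMod 2),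
        Fc n f x * cj (Fc n f x) * E (D n c.1 x.1 + D n c.2 x.2)
      = ∑ v : Fin n → ZMod 2, ∑ w : Fin n → ZMod 2,
          Fc n f (v, w) * cj (Fc n f (v, w)) * E (D n c.1 v + D n c.2 w) := by
        rw [Fintype.sum_prod_type]
    _ = ∑ v : Fin n → ZMod 2, (2:ℂ)^n * ∑ x, f x * cj (f (x + v)) * cj (f (x + c.2))
          * f (x + c.2 + v) * E (D n c.1 v) := Finset.sum_congr rfl fun v _ => inner v
    _ = (2:ℂ)^n * ∑ v : Fin n → ZMod 2, ∑ x, f x * cj (f (x + v)) * cj (f (x + c.2))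
          * f (x + c.2 + v) * E (D n c.1 v) := by rw [← Finset.mul_sum]
    _ = (2:ℂ)^n * ∑ x, ∑ u : Fin n → ZMod 2,
          (f x * cj (f (x + c.2)) * E (D n c.1 x)) * (cj (f u) * f (u + c.2) * E (D n c.1 u)) := by
        congr 1
        rw [Finset.sum_comm]
        refine Finset.sum_congr rfl fun x _ => ?_
        refine Fintype.sum_equiv (Equiv.addLeft x) _ _ fun u => ?_
        have h2 : x + c.2 + u = x + u + c.2 := by ring
        have h3 : E (D n c.1 u) = E (D n c.1 x) * E (D n c.1 (x + u)) := by
          rw [← E_add, ← D_add_right]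
          congr 2
          rw [← add_assoc, addself, zero_add]
        simp only [Equiv.coe_addLeft]
        rw [h2, h3]
        ring
    _ = (2:ℂ)^n * (Fc n f (c.2, c.1) * cj (Fc n f (c.2, c.1))) := by
        rw [conj_Fc, Fc, Finset.sum_mul_sum]


lemma charDist_eq (n : ℕ) (f : (Fin n → ZMod 2) → ℂ)
    (x : (Fin n → ZMod 2) × (Fin n → ZMod 2)) :
    charDist n f x = ((2 : ℝ) ^ n)⁻¹ * ‖Fc n f x‖ ^ 2 := by
  unfold charDist Fc
  congr 3
  exact Finset.sum_congr rfl fun y _ => by rw [E_val]; rfl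

lemma charDist_nonneg (n : ℕ) (f : (Fin n → ZMod 2) → ℂ)
    (x : (Fin n → ZMod 2) × (Fin n → ZMod 2)) : 0 ≤ charDist n f x := by
  rw [charDist_eq]; positivity

lemma mul_conj_self (z : ℂ) : z * (starRingEnd ℂ) z = ((‖z‖ ^ 2 : ℝ) : ℂ) := by
  rw [Complex.mul_conj]
  norm_cast
  rw [Complex.normSq_eq_norm_sq]

/-- the key duality over ℝ -/
lemma dualR (n : ℕ) (f : (Fin n → ZMod 2) → ℂ)
    (c : (Fin n → ZMod 2) × (Fin n → ZMod 2)) :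
    ∑ x : (Fin n → ZMod 2) × (Fin n → ZMod 2),
        charDist n f x * sgn (D n c.1 x.1 + D n c.2 x.2)
      = (2 : ℝ) ^ n * charDist n f (c.2, c.1) := by
  have h := dualC n f c
  rw [mul_conj_self] at h
  have hLHS : ((∑ x : (Fin n → ZMod 2) × (Fin n → ZMod 2),
      charDist n f x * sgn (D n c.1 x.1 + D n c.2 x.2) : ℝ) : ℂ)
      = ((2:ℂ)^n)⁻¹ * ∑ x : (Fin n → ZMod 2) × (Fin n → ZMod 2),
        Fc n f x * (starRingEnd ℂ) (Fc n f x) * E (D n c.1 x.1 + D n c.2 x.2) := by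
    push_cast
    rw [Finset.mul_sum]
    refine Finset.sum_congr rfl fun x _ => ?_
    rw [mul_conj_self, charDist_eq]
    push_cast [E]
    ring
  apply Complex.ofReal_injective
  rw [hLHS, h, charDist_eq]
  push_cast
  field_simp

lemma D_zero_left (n : ℕ) (y : Fin n → ZMod 2) : D n 0 y = 0 := by simp [D]

lemma charDist_zero (n : ℕ) (f : (Fin n → ZMod 2) → ℂ)
    (hf : ∑ x : Fin n → ZMod 2, ‖f x‖ ^ 2 = 1) :
    charDist n f 0 = ((2 : ℝ) ^ n)⁻¹ := by
  have hFc : (∑ y : Fin n → ZMod 2,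
      f y * (starRingEnd ℂ) (f (y + (0 : (Fin n → ZMod 2) × (Fin n → ZMod 2)).1)) *
        (-1 : ℂ) ^ (∑ i, (0 : (Fin n → ZMod 2) × (Fin n → ZMod 2)).2 i * y i : ZMod 2).val)
      = (1 : ℂ) := by
    have : ∀ y : Fin n → ZMod 2,
        f y * (starRingEnd ℂ) (f (y + (0 : (Fin n → ZMod 2) × (Fin n → ZMod 2)).1)) *
          (-1 : ℂ) ^ (∑ i, (0 : (Fin n → ZMod 2) × (Fin n → ZMod 2)).2 i * y i : ZMod 2).val
        = ((‖f y‖ ^ 2 : ℝ) : ℂ) := by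
      intro y
      have h0 : (∑ i, (0 : (Fin n → ZMod 2) × (Fin n → ZMod 2)).2 i * y i : ZMod 2) = 0 := by
        simp
      rw [h0]
      simp only [ZMod.val_zero, pow_zero, mul_one, add_zero]
      have : (y + (0 : (Fin n → ZMod 2) × (Fin n → ZMod 2)).1) = y := by simp
      rw [this, Complex.mul_conj, Complex.normSq_eq_norm_sq]
    rw [Finset.sum_congr rfl fun y _ => this y, ← Complex.ofReal_sum]
    rw [hf]
    norm_num
  unfold charDist
  rw [hFc]
  norm_num

lemma sum_charDist (n : ℕ) (f : (Fin n → ZMod 2) → ℂ)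
    (hf : ∑ x : Fin n → ZMod 2, ‖f x‖ ^ 2 = 1) :
    ∑ x : (Fin n → ZMod 2) × (Fin n → ZMod 2), charDist n f x = 1 := by
  have h := dualR n f 0
  have h2 : ∀ x : (Fin n → ZMod 2) × (Fin n → ZMod 2),
      charDist n f x * sgn (D n (0 : (Fin n → ZMod 2) × (Fin n → ZMod 2)).1 x.1
        + D n (0 : (Fin n → ZMod 2) × (Fin n → ZMod 2)).2 x.2) = charDist n f x := by
    intro x
    have e1 : ((0 : (Fin n → ZMod 2) × (Fin n → ZMod 2)).1) = (0 : Fin n → ZMod 2) := rfl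
    have e2 : ((0 : (Fin n → ZMod 2) × (Fin n → ZMod 2)).2) = (0 : Fin n → ZMod 2) := rfl
    rw [e1, e2, D_zero_left, D_zero_left, add_zero, sgn_zero, mul_one]
  rw [Finset.sum_congr rfl fun x _ => h2 x] at h
  rw [h]
  have : charDist n f ((0 : (Fin n → ZMod 2) × (Fin n → ZMod 2)).2,
      (0 : (Fin n → ZMod 2) × (Fin n → ZMod 2)).1) = charDist n f 0 := rfl
  rw [this, charDist_zero n f hf]
  field_simp

/-- key convolution identity: the triple correlation equals `2ⁿ ∑ p³`. -/
lemma triple_eq (n : ℕ) (f : (Fin n → ZMod 2) → ℂ) :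
    ∑ x : (Fin n → ZMod 2) × (Fin n → ZMod 2),
      ∑ y : (Fin n → ZMod 2) × (Fin n → ZMod 2),
        charDist n f x * charDist n f y * charDist n f (x + y)
    = (2 : ℝ) ^ n * ∑ d : (Fin n → ZMod 2) × (Fin n → ZMod 2), charDist n f d ^ 3 := by
  set P := charDist n f with hP
  have h2n : (2 : ℝ) ^ n ≠ 0 := by positivity
  -- inversion formula for P
  have Pinv : ∀ z : (Fin n → ZMod 2) × (Fin n → ZMod 2),
      P z = ((2 : ℝ) ^ n)⁻¹ * ∑ d : (Fin n → ZMod 2) × (Fin n → ZMod 2),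
        P d * sgn (D n z.2 d.1 + D n z.1 d.2) := by
    intro z
    have h := dualR n f (z.2, z.1)
    simp only at h
    rw [h]
    rw [inv_mul_cancel_left₀ h2n]
  have Smul : ∀ d x y : (Fin n → ZMod 2) × (Fin n → ZMod 2),
      sgn (D n (x + y).2 d.1 + D n (x + y).1 d.2)
      = sgn (D n x.2 d.1 + D n x.1 d.2) * sgn (D n y.2 d.1 + D n y.1 d.2) := by
    intro d x y
    have e1 : (x + y).2 = x.2 + y.2 := rfl
    have e2 : (x + y).1 = x.1 + y.1 := rfl
    rw [e1, e2, D_symm n (x.2 + y.2) d.1, D_add_right, D_symm n (x.1 + y.1) d.2, D_add_right,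
      show D n d.1 x.2 + D n d.1 y.2 + (D n d.2 x.1 + D n d.2 y.1)
        = (D n d.1 x.2 + D n d.2 x.1) + (D n d.1 y.2 + D n d.2 y.1) by ring, sgn_add]
    rw [D_symm n d.1 x.2, D_symm n d.2 x.1, D_symm n d.1 y.2, D_symm n d.2 y.1]
  calc ∑ x : (Fin n → ZMod 2) × (Fin n → ZMod 2),
        ∑ y : (Fin n → ZMod 2) × (Fin n → ZMod 2), P x * P y * P (x + y)
      = ∑ x : (Fin n → ZMod 2) × (Fin n → ZMod 2),
          ∑ y : (Fin n → ZMod 2) × (Fin n → ZMod 2),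
            ∑ d : (Fin n → ZMod 2) × (Fin n → ZMod 2),
              ((2 : ℝ) ^ n)⁻¹ * ((P x * sgn (D n x.2 d.1 + D n x.1 d.2))
                * (P y * sgn (D n y.2 d.1 + D n y.1 d.2)) * P d) := by
        refine Finset.sum_congr rfl fun x _ => Finset.sum_congr rfl fun y _ => ?_
        rw [Pinv (x + y), Finset.mul_sum, Finset.mul_sum]
        refine Finset.sum_congr rfl fun d _ => ?_
        rw [Smul d x y]
        ring
    _ = ∑ d : (Fin n → ZMod 2) × (Fin n → ZMod 2),
          ∑ x : (Fin n → ZMod 2) × (Fin n → ZMod 2),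
            ∑ y : (Fin n → ZMod 2) × (Fin n → ZMod 2),
              ((2 : ℝ) ^ n)⁻¹ * ((P x * sgn (D n x.2 d.1 + D n x.1 d.2))
                * (P y * sgn (D n y.2 d.1 + D n y.1 d.2)) * P d) := by
        exact (Finset.sum_congr rfl fun x _ => Finset.sum_comm).trans Finset.sum_comm
    _ = ∑ d : (Fin n → ZMod 2) × (Fin n → ZMod 2),
          ((2 : ℝ) ^ n)⁻¹ * P d *
            ((∑ x : (Fin n → ZMod 2) × (Fin n → ZMod 2),
                P x * sgn (D n x.2 d.1 + D n x.1 d.2)) *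
             (∑ y : (Fin n → ZMod 2) × (Fin n → ZMod 2),
                P y * sgn (D n y.2 d.1 + D n y.1 d.2))) := by
        refine Finset.sum_congr rfl fun d _ => ?_
        rw [Finset.sum_mul_sum, Finset.mul_sum]
        refine Finset.sum_congr rfl fun x _ => ?_
        rw [Finset.mul_sum]
        refine Finset.sum_congr rfl fun y _ => ?_
        ring
    _ = ∑ d : (Fin n → ZMod 2) × (Fin n → ZMod 2),
          ((2 : ℝ) ^ n)⁻¹ * P d * (((2 : ℝ) ^ n * P d) * ((2 : ℝ) ^ n * P d)) := by
        refine Finset.sum_congr rfl fun d _ => ?_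
        have hd : ∑ x : (Fin n → ZMod 2) × (Fin n → ZMod 2),
            P x * sgn (D n x.2 d.1 + D n x.1 d.2) = (2 : ℝ) ^ n * P d := by
          have h := dualR n f (d.2, d.1)
          simp only at h
          have hswap : ∀ x : (Fin n → ZMod 2) × (Fin n → ZMod 2),
              sgn (D n x.2 d.1 + D n x.1 d.2) = sgn (D n d.2 x.1 + D n d.1 x.2) := by
            intro x
            rw [D_symm n x.2 d.1, D_symm n x.1 d.2, add_comm]
          rw [Finset.sum_congr rfl fun x _ => by rw [hswap x]]
          rw [h]
        rw [hd]
    _ = (2 : ℝ) ^ n * ∑ d : (Fin n → ZMod 2) × (Fin n → ZMod 2), P d ^ 3 := by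
        rw [Finset.mul_sum]
        refine Finset.sum_congr rfl fun d _ => ?_
        field_simp

end Stmt5Aux

/-- if `2ⁿ·∑ p(x)² ≥ γ`, then `2ⁿ·∑_{x,y} p(x)p(y)p(x+y) ≥ γ²`. -/
theorem stmt_5 (n : ℕ) (hn : 1 ≤ n) (f : (Fin n → ZMod 2) → ℂ)
    (hf : ∑ x : Fin n → ZMod 2, ‖f x‖ ^ 2 = 1) (γ : ℝ) (hγ : γ ∈ Set.Icc (0 : ℝ) 1)
    (h : (2 : ℝ) ^ n * ∑ x : (Fin n → ZMod 2) × (Fin n → ZMod 2),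
        (charDist n f x) ^ 2 ≥ γ) :
    (2 : ℝ) ^ n *
        ∑ x : (Fin n → ZMod 2) × (Fin n → ZMod 2),
          ∑ y : (Fin n → ZMod 2) × (Fin n → ZMod 2),
            charDist n f x * charDist n f y * charDist n f (x + y) ≥ γ ^ 2 := by
  obtain ⟨hγ0, hγ1⟩ := hγ
  set P := charDist n f with hP
  have hPnn : ∀ x, 0 ≤ P x := Stmt5Aux.charDist_nonneg n f
  have hsum1 : ∑ x : (Fin n → ZMod 2) × (Fin n → ZMod 2), P x = 1 :=
    Stmt5Aux.sum_charDist n f hf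
  have hT := Stmt5Aux.triple_eq n f
  rw [hT]
  -- Cauchy-Schwarz: (∑ P²)² ≤ (∑ P³) * (∑ P) = ∑ P³
  have hCS : (∑ x : (Fin n → ZMod 2) × (Fin n → ZMod 2), P x ^ 2) ^ 2
      ≤ (∑ x : (Fin n → ZMod 2) × (Fin n → ZMod 2), P x ^ 3)
        * ∑ x : (Fin n → ZMod 2) × (Fin n → ZMod 2), P x := by
    refine Finset.sum_sq_le_sum_mul_sum_of_sq_eq_mul Finset.univ
      (fun i _ => pow_nonneg (hPnn i) 3) (fun i _ => hPnn i) (fun i _ => by ring)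
  rw [hsum1, mul_one] at hCS
  have h1 : γ ^ 2 ≤ ((2 : ℝ) ^ n * ∑ x : (Fin n → ZMod 2) × (Fin n → ZMod 2), P x ^ 2) ^ 2 :=
    pow_le_pow_left₀ hγ0 h 2
  have h2 : ((2 : ℝ) ^ n * ∑ x : (Fin n → ZMod 2) × (Fin n → ZMod 2), P x ^ 2) ^ 2
      ≤ (2 : ℝ) ^ n * ((2 : ℝ) ^ n *
        ∑ d : (Fin n → ZMod 2) × (Fin n → ZMod 2), P d ^ 3) := by
    have e : ((2 : ℝ) ^ n * ∑ x : (Fin n → ZMod 2) × (Fin n → ZMod 2), P x ^ 2) ^ 2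
        = ((2 : ℝ) ^ n) ^ 2 * (∑ x : (Fin n → ZMod 2) × (Fin n → ZMod 2), P x ^ 2) ^ 2 := by
      ring
    rw [e, show (2 : ℝ) ^ n * ((2 : ℝ) ^ n *
        ∑ d : (Fin n → ZMod 2) × (Fin n → ZMod 2), P d ^ 3)
      = ((2 : ℝ) ^ n) ^ 2 * ∑ d : (Fin n → ZMod 2) × (Fin n → ZMod 2), P d ^ 3 by ring]
    exact mul_le_mul_of_nonneg_left hCS (by positivity)
  linarith
end

section
/- There is a universal constant c > 0 such that the following holds. For every n ≥ 1, every γ ∈ (0,1], and every amplitude vector f with characteristic distribution p satisfying 2ⁿ · ∑_{x ∈ 𝔽₂^{2n}} p(x)² ≥ √γ, there exists a finite set S ⊆ 𝔽₂^{2n} such that: (i) (γ²/80)·2ⁿ ≤ |S| ≤ (4/γ)·2ⁿ; (ii) every x ∈ S satisfies 2ⁿ·p(x) ≥ γ/4; (iii) |{(s,s') ∈ S × S : s + s' ∈ S}| ≥ c·γ⁵·|S|²; and (iv) 0 ∈ S. -/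
set_option maxHeartbeats 1000000

open Finset

namespace Stmt6Aux

/-- sign character on `ZMod 2`, valued in `ℂ`. -/
noncomputable def sg (s : ZMod 2) : ℂ := (-1 : ℂ) ^ s.val

/-- inner product on `𝔽₂ⁿ`. -/
def ip {n : ℕ} (w y : Fin n → ZMod 2) : ZMod 2 := ∑ i, w i * y i

/-- the (unnormalized) characteristic function. -/
noncomputable def gf (n : ℕ) (f : (Fin n → ZMod 2) → ℂ)
    (x : (Fin n → ZMod 2) × (Fin n → ZMod 2)) : ℂ :=
  ∑ y : Fin n → ZMod 2,
    f y * (starRingEnd ℂ) (f (y + x.1)) *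
      (-1 : ℂ) ^ (∑ i, x.2 i * y i : ZMod 2).val

lemma sg_zero : sg 0 = 1 := rfl

lemma z2 (s : ZMod 2) : s = 0 ∨ s = 1 := by revert s; decide

lemma sg_add (s t : ZMod 2) : sg (s + t) = sg s * sg t := by
  rcases z2 s with rfl | rfl <;> rcases z2 t with rfl | rfl <;>
    simp [sg, show ((1+1 : ZMod 2)).val = 0 from rfl, show ((1:ZMod 2)).val = 1 from rfl]

lemma ip_comm {n : ℕ} (w y : Fin n → ZMod 2) : ip w y = ip y w := by
  unfold ip; exact Finset.sum_congr rfl fun i _ => mul_comm _ _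

lemma ip_add_right {n : ℕ} (w y z : Fin n → ZMod 2) :
    ip w (y + z) = ip w y + ip w z := by
  unfold ip
  rw [← Finset.sum_add_distrib]
  exact Finset.sum_congr rfl fun i _ => by simp [mul_add]

lemma ip_add_left {n : ℕ} (w y z : Fin n → ZMod 2) :
    ip (w + y) z = ip w z + ip y z := by
  rw [ip_comm, ip_add_right, ip_comm z w, ip_comm z y]

lemma ip_zero_left {n : ℕ} (y : Fin n → ZMod 2) : ip 0 y = 0 := by
  unfold ip; simp

lemma sg_sum {ι : Type*} (s : Finset ι) (h : ι → ZMod 2) :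
    sg (∑ i ∈ s, h i) = ∏ i ∈ s, sg (h i) := by
  induction s using Finset.cons_induction with
  | empty => simp [sg_zero]
  | cons a s ha ih => rw [Finset.sum_cons, Finset.prod_cons, sg_add, ih]

/-- orthogonality of characters. -/
lemma orth {n : ℕ} (t : Fin n → ZMod 2) :
    ∑ w : Fin n → ZMod 2, sg (ip w t) = if t = 0 then (2 : ℂ) ^ n else 0 := by
  have key : ∀ c : ZMod 2, ∑ b : ZMod 2, sg (b * c) = if c = 0 then 2 else 0 := by
    intro c
    rw [show (univ : Finset (ZMod 2)) = {0, 1} from by decide,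
      Finset.sum_pair (by decide)]
    rcases z2 c with rfl | rfl <;> simp [sg, show ((1 : ZMod 2)).val = 1 from rfl] <;> norm_num
  calc ∑ w : Fin n → ZMod 2, sg (ip w t)
      = ∑ w : Fin n → ZMod 2, ∏ i, sg (w i * t i) := by
        refine Finset.sum_congr rfl fun w _ => ?_
        rw [ip, sg_sum]
    _ = ∏ i, ∑ b : ZMod 2, sg (b * t i) := by
        rw [Finset.prod_univ_sum]
        rw [Fintype.piFinset_univ]
    _ = ∏ i, (if t i = 0 then (2:ℂ) else 0) := by
        exact Finset.prod_congr rfl fun i _ => key (t i)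
    _ = if t = 0 then (2 : ℂ) ^ n else 0 := by
        by_cases ht : t = 0
        · subst ht; simp
        · rw [if_neg ht]
          obtain ⟨i, hi⟩ := Function.ne_iff.mp ht
          exact Finset.prod_eq_zero (Finset.mem_univ i) (by simpa using hi)


lemma gf_eq {n : ℕ} (f : (Fin n → ZMod 2) → ℂ) (x) :
    gf n f x = ∑ y : Fin n → ZMod 2,
      f y * (starRingEnd ℂ) (f (y + x.1)) * sg (ip x.2 y) := rfl

lemma charDist_eq {n : ℕ} (f : (Fin n → ZMod 2) → ℂ) (x) :
    charDist n f x = ((2 : ℝ) ^ n)⁻¹ * ‖gf n f x‖ ^ 2 := rfl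

lemma conj_gf {n : ℕ} (f : (Fin n → ZMod 2) → ℂ) (x) :
    (starRingEnd ℂ) (gf n f x) = ∑ z : Fin n → ZMod 2,
      (starRingEnd ℂ) (f z) * f (z + x.1) * sg (ip x.2 z) := by
  rw [gf_eq, map_sum]
  refine Finset.sum_congr rfl fun z _ => ?_
  simp only [sg, ip, map_mul, Complex.conj_conj, map_pow, map_neg, map_one]

lemma add_self_zero {n : ℕ} (u : Fin n → ZMod 2) : u + u = 0 := by
  funext i
  have h : ∀ s : ZMod 2, s + s = 0 := by decide
  exact h (u i)

/-- self-duality, complex version. -/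
lemma selfdualC {n : ℕ} (f : (Fin n → ZMod 2) → ℂ)
    (a : (Fin n → ZMod 2) × (Fin n → ZMod 2)) :
    ∑ x : (Fin n → ZMod 2) × (Fin n → ZMod 2),
        (sg (ip a.1 x.2) * sg (ip a.2 x.1)) * (gf n f x * (starRingEnd ℂ) (gf n f x))
      = (2 : ℂ) ^ n * (gf n f a * (starRingEnd ℂ) (gf n f a)) := by
  have hiff : ∀ y z : Fin n → ZMod 2, (y + z + a.1 = 0) ↔ (z = y + a.1) := by
    intro y z
    constructor
    · intro h
      linear_combination h - add_self_zero y - add_self_zero a.1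
    · intro h
      subst h
      linear_combination add_self_zero y + add_self_zero a.1
  calc ∑ x : (Fin n → ZMod 2) × (Fin n → ZMod 2),
        (sg (ip a.1 x.2) * sg (ip a.2 x.1)) * (gf n f x * (starRingEnd ℂ) (gf n f x))
      = ∑ v : Fin n → ZMod 2, ∑ w : Fin n → ZMod 2, ∑ y : Fin n → ZMod 2,
          ∑ z : Fin n → ZMod 2,
          (f y * (starRingEnd ℂ) (f (y + v)) * (starRingEnd ℂ) (f z) * f (z + v) *
              sg (ip a.2 v)) *
            (sg (ip w y) * sg (ip w z) * sg (ip a.1 w)) := by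
        rw [Fintype.sum_prod_type]
        refine Finset.sum_congr rfl fun v _ => Finset.sum_congr rfl fun w _ => ?_
        rw [conj_gf, gf_eq, Finset.sum_mul_sum, Finset.mul_sum]
        refine Finset.sum_congr rfl fun y _ => ?_
        rw [Finset.mul_sum]
        refine Finset.sum_congr rfl fun z _ => ?_
        ring
    _ = ∑ v : Fin n → ZMod 2, ∑ y : Fin n → ZMod 2, ∑ z : Fin n → ZMod 2,
          ∑ w : Fin n → ZMod 2,
          (f y * (starRingEnd ℂ) (f (y + v)) * (starRingEnd ℂ) (f z) * f (z + v) *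
              sg (ip a.2 v)) *
            (sg (ip w y) * sg (ip w z) * sg (ip a.1 w)) := by
        refine Finset.sum_congr rfl fun v _ => ?_
        rw [Finset.sum_comm]
        refine Finset.sum_congr rfl fun y _ => ?_
        rw [Finset.sum_comm]
    _ = ∑ v : Fin n → ZMod 2, ∑ y : Fin n → ZMod 2, ∑ z : Fin n → ZMod 2,
          (f y * (starRingEnd ℂ) (f (y + v)) * (starRingEnd ℂ) (f z) * f (z + v) *
              sg (ip a.2 v)) *
            (if y + z + a.1 = 0 then (2 : ℂ) ^ n else 0) := by
        refine Finset.sum_congr rfl fun v _ => Finset.sum_congr rfl fun y _ =>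
          Finset.sum_congr rfl fun z _ => ?_
        rw [← Finset.mul_sum]
        congr 1
        rw [← orth (y + z + a.1)]
        refine Finset.sum_congr rfl fun w _ => ?_
        rw [ip_add_right w (y + z) a.1, ip_add_right w y z, sg_add, sg_add,
          ip_comm w a.1]
    _ = ∑ v : Fin n → ZMod 2, ∑ y : Fin n → ZMod 2,
          (f y * (starRingEnd ℂ) (f (y + v)) * (starRingEnd ℂ) (f (y + a.1)) *
              f (y + a.1 + v) * sg (ip a.2 v)) * (2 : ℂ) ^ n := by
        refine Finset.sum_congr rfl fun v _ => Finset.sum_congr rfl fun y _ => ?_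
        have : ∀ z : Fin n → ZMod 2,
            (f y * (starRingEnd ℂ) (f (y + v)) * (starRingEnd ℂ) (f z) * f (z + v) *
                sg (ip a.2 v)) * (if y + z + a.1 = 0 then (2 : ℂ) ^ n else 0)
            = if z = y + a.1 then
                (f y * (starRingEnd ℂ) (f (y + v)) * (starRingEnd ℂ) (f z) * f (z + v) *
                  sg (ip a.2 v)) * (2 : ℂ) ^ n else 0 := by
          intro z
          rw [if_congr (hiff y z) rfl rfl, mul_ite, mul_zero]
        rw [Finset.sum_congr rfl fun z _ => this z, Finset.sum_ite_eq' univ (y + a.1),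
          if_pos (Finset.mem_univ _)]
    _ = (2 : ℂ) ^ n * ∑ y : Fin n → ZMod 2, ∑ v : Fin n → ZMod 2,
          f y * (starRingEnd ℂ) (f (y + v)) * (starRingEnd ℂ) (f (y + a.1)) *
            f (y + a.1 + v) * sg (ip a.2 v) := by
        rw [Finset.sum_comm, Finset.mul_sum]
        refine Finset.sum_congr rfl fun y _ => ?_
        rw [Finset.mul_sum]
        exact Finset.sum_congr rfl fun v _ => by ring
    _ = (2 : ℂ) ^ n * ∑ y : Fin n → ZMod 2, ∑ z : Fin n → ZMod 2,
          (f y * (starRingEnd ℂ) (f (y + a.1)) * sg (ip a.2 y)) *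
            ((starRingEnd ℂ) (f z) * f (z + a.1) * sg (ip a.2 z)) := by
        congr 1
        refine Finset.sum_congr rfl fun y _ => ?_
        rw [← Equiv.sum_comp (Equiv.addLeft y) (fun v =>
          f y * (starRingEnd ℂ) (f (y + v)) * (starRingEnd ℂ) (f (y + a.1)) *
            f (y + a.1 + v) * sg (ip a.2 v))]
        refine Finset.sum_congr rfl fun z _ => ?_
        simp only [Equiv.coe_addLeft]
        have h1 : y + (y + z) = z := by linear_combination add_self_zero y
        have h2 : y + a.1 + (y + z) = z + a.1 := by linear_combination add_self_zero y
        rw [h1, h2, ip_add_right, sg_add]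
        ring
    _ = (2 : ℂ) ^ n * (gf n f a * (starRingEnd ℂ) (gf n f a)) := by
        rw [conj_gf, gf_eq, Finset.sum_mul_sum]


/-- real sign. -/
noncomputable def er {n : ℕ} (a x : (Fin n → ZMod 2) × (Fin n → ZMod 2)) : ℝ :=
  (-1 : ℝ) ^ (ip a.1 x.2).val * (-1 : ℝ) ^ (ip a.2 x.1).val

lemma er_symm {n : ℕ} (a x : (Fin n → ZMod 2) × (Fin n → ZMod 2)) :
    er a x = er x a := by
  unfold er
  rw [ip_comm a.1 x.2, ip_comm a.2 x.1, mul_comm]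

lemma sgR_add (s t : ZMod 2) :
    (-1 : ℝ) ^ (s + t).val = (-1 : ℝ) ^ s.val * (-1 : ℝ) ^ t.val := by
  rcases z2 s with rfl | rfl <;> rcases z2 t with rfl | rfl <;>
    simp [show ((1+1 : ZMod 2)).val = 0 from rfl, show ((1:ZMod 2)).val = 1 from rfl]

lemma er_add_left {n : ℕ} (a b x : (Fin n → ZMod 2) × (Fin n → ZMod 2)) :
    er (a + b) x = er a x * er b x := by
  unfold er
  rw [Prod.fst_add, Prod.snd_add, ip_add_left, ip_add_left, sgR_add, sgR_add]
  ring

lemma er_zero {n : ℕ} (x : (Fin n → ZMod 2) × (Fin n → ZMod 2)) :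
    er 0 x = 1 := by
  unfold er
  simp [ip_zero_left, Prod.fst_zero, Prod.snd_zero]

/-- self-duality for charDist. -/
lemma selfdualP {n : ℕ} (f : (Fin n → ZMod 2) → ℂ)
    (a : (Fin n → ZMod 2) × (Fin n → ZMod 2)) :
    ∑ x : (Fin n → ZMod 2) × (Fin n → ZMod 2), er a x * charDist n f x
      = (2 : ℝ) ^ n * charDist n f a := by
  have hc : ∀ z : ℂ, ((‖z‖ ^ 2 : ℝ) : ℂ) = z * (starRingEnd ℂ) z := fun z => by
    rw [Complex.mul_conj, Complex.normSq_eq_norm_sq]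
  have h2 : ((2 : ℝ) ^ n : ℝ) ≠ 0 := by positivity
  have her : ∀ x : (Fin n → ZMod 2) × (Fin n → ZMod 2),
      ((er a x : ℝ) : ℂ) = sg (ip a.1 x.2) * sg (ip a.2 x.1) := fun x => by
    rw [er]; push_cast; rfl
  have key : ∑ x : (Fin n → ZMod 2) × (Fin n → ZMod 2), er a x * ‖gf n f x‖ ^ 2
      = (2 : ℝ) ^ n * ‖gf n f a‖ ^ 2 := by
    apply Complex.ofReal_injective
    calc ((∑ x : (Fin n → ZMod 2) × (Fin n → ZMod 2), er a x * ‖gf n f x‖ ^ 2 : ℝ) : ℂ)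
        = ∑ x : (Fin n → ZMod 2) × (Fin n → ZMod 2),
            (sg (ip a.1 x.2) * sg (ip a.2 x.1)) * (gf n f x * (starRingEnd ℂ) (gf n f x)) := by
          rw [Complex.ofReal_sum]
          exact Finset.sum_congr rfl fun x _ => by rw [Complex.ofReal_mul, hc, her]
      _ = (2 : ℂ) ^ n * (gf n f a * (starRingEnd ℂ) (gf n f a)) := selfdualC f a
      _ = (((2 : ℝ) ^ n * ‖gf n f a‖ ^ 2 : ℝ) : ℂ) := by
          rw [Complex.ofReal_mul, hc]; norm_num
  calc ∑ x : (Fin n → ZMod 2) × (Fin n → ZMod 2), er a x * charDist n f x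
      = ((2 : ℝ) ^ n)⁻¹ * ∑ x : (Fin n → ZMod 2) × (Fin n → ZMod 2),
          er a x * ‖gf n f x‖ ^ 2 := by
        rw [Finset.mul_sum]
        exact Finset.sum_congr rfl fun x _ => by rw [charDist_eq]; ring
    _ = ((2 : ℝ) ^ n)⁻¹ * ((2 : ℝ) ^ n * ‖gf n f a‖ ^ 2) := by rw [key]
    _ = (2 : ℝ) ^ n * charDist n f a := by rw [charDist_eq]; field_simp

lemma charDist_nonneg {n : ℕ} (f : (Fin n → ZMod 2) → ℂ) (x) :
    0 ≤ charDist n f x := by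
  unfold charDist
  positivity

lemma charDist_zero {n : ℕ} (f : (Fin n → ZMod 2) → ℂ)
    (hf : ∑ x : Fin n → ZMod 2, ‖f x‖ ^ 2 = 1) :
    charDist n f 0 = ((2 : ℝ) ^ n)⁻¹ := by
  have hg : gf n f 0 = 1 := by
    have : gf n f 0 = ∑ y : Fin n → ZMod 2, ((‖f y‖ ^ 2 : ℝ) : ℂ) := by
      rw [gf_eq]
      refine Finset.sum_congr rfl fun y _ => ?_
      have : ip (0 : (Fin n → ZMod 2) × (Fin n → ZMod 2)).2 y = 0 := ip_zero_left y
      rw [this, sg_zero, mul_one, Prod.fst_zero, add_zero, Complex.mul_conj,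
        Complex.normSq_eq_norm_sq]
    rw [this, ← Complex.ofReal_sum, hf, Complex.ofReal_one]
  rw [charDist_eq, hg]
  simp

lemma sum_charDist {n : ℕ} (f : (Fin n → ZMod 2) → ℂ)
    (hf : ∑ x : Fin n → ZMod 2, ‖f x‖ ^ 2 = 1) :
    ∑ x : (Fin n → ZMod 2) × (Fin n → ZMod 2), charDist n f x = 1 := by
  have h2 : ((2 : ℝ) ^ n : ℝ) ≠ 0 := by positivity
  have := selfdualP f 0
  rw [charDist_zero f hf, mul_inv_cancel₀ h2] at this
  rw [← this]
  exact Finset.sum_congr rfl fun x _ => by rw [er_zero, one_mul]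

lemma charDist_le {n : ℕ} (f : (Fin n → ZMod 2) → ℂ)
    (hf : ∑ x : Fin n → ZMod 2, ‖f x‖ ^ 2 = 1) (x) :
    charDist n f x ≤ ((2 : ℝ) ^ n)⁻¹ := by
  have hnorm : ‖gf n f x‖ ≤ 1 := by
    have step1 : ‖gf n f x‖ ≤ ∑ y : Fin n → ZMod 2, ‖f y‖ * ‖f (y + x.1)‖ := by
      rw [gf_eq]
      refine (norm_sum_le _ _).trans (Finset.sum_le_sum fun y _ => ?_)
      rw [norm_mul, norm_mul]
      have hs : ‖sg (ip x.2 y)‖ = 1 := by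
        rw [sg, norm_pow, norm_neg, norm_one, one_pow]
      rw [hs, mul_one, RingHomIsometric.norm_map]
    have step2 : (∑ y : Fin n → ZMod 2, ‖f y‖ * ‖f (y + x.1)‖) ^ 2 ≤ 1 := by
      have cs := Finset.sum_mul_sq_le_sq_mul_sq Finset.univ
        (fun y => ‖f y‖) (fun y => ‖f (y + x.1)‖)
      have hshift : ∑ y : Fin n → ZMod 2, ‖f (y + x.1)‖ ^ 2 = 1 := by
        rw [← hf]
        exact Equiv.sum_comp (Equiv.addRight x.1) (fun y => ‖f y‖ ^ 2)
      rw [hf, hshift, one_mul] at cs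
      exact cs
    nlinarith [Finset.sum_nonneg (fun y (_ : y ∈ (Finset.univ : Finset (Fin n → ZMod 2))) =>
      mul_nonneg (norm_nonneg (f y)) (norm_nonneg (f (y + x.1)))), norm_nonneg (gf n f x)]
  rw [charDist_eq]
  have : ‖gf n f x‖ ^ 2 ≤ 1 := by nlinarith [norm_nonneg (gf n f x)]
  have h2 : (0:ℝ) < ((2 : ℝ) ^ n)⁻¹ := by positivity
  nlinarith

lemma sum_factor {ι : Type*} [Fintype ι] (u v : ι → ℝ) (c : ℝ) :
    ∑ a : ι, ∑ b : ι, c * (u a * v b) = c * ((∑ a : ι, u a) * (∑ b : ι, v b)) := by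
  rw [Finset.sum_mul_sum, Finset.mul_sum]
  exact Finset.sum_congr rfl fun a _ => (Finset.mul_sum _ _ _).symm

lemma tripleId {n : ℕ} (f : (Fin n → ZMod 2) → ℂ) :
    ∑ a : (Fin n → ZMod 2) × (Fin n → ZMod 2),
      ∑ b : (Fin n → ZMod 2) × (Fin n → ZMod 2),
        charDist n f a * charDist n f b * charDist n f (a + b)
      = (2 : ℝ) ^ n * ∑ x : (Fin n → ZMod 2) × (Fin n → ZMod 2),
          charDist n f x ^ 3 := by
  have h2 : ((2 : ℝ) ^ n) ≠ 0 := by positivity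
  have hinv : ∀ c : (Fin n → ZMod 2) × (Fin n → ZMod 2),
      charDist n f c = ((2 : ℝ) ^ n)⁻¹ *
        ∑ x : (Fin n → ZMod 2) × (Fin n → ZMod 2), er c x * charDist n f x := by
    intro c
    rw [selfdualP]
    field_simp
  have hA : ∀ x : (Fin n → ZMod 2) × (Fin n → ZMod 2),
      ∑ a : (Fin n → ZMod 2) × (Fin n → ZMod 2), er a x * charDist n f a
        = (2 : ℝ) ^ n * charDist n f x := by
    intro x
    rw [← selfdualP f x]
    exact Finset.sum_congr rfl fun a _ => by rw [er_symm]
  calc ∑ a : (Fin n → ZMod 2) × (Fin n → ZMod 2),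
        ∑ b : (Fin n → ZMod 2) × (Fin n → ZMod 2),
          charDist n f a * charDist n f b * charDist n f (a + b)
      = ∑ a : (Fin n → ZMod 2) × (Fin n → ZMod 2),
          ∑ b : (Fin n → ZMod 2) × (Fin n → ZMod 2),
            ∑ x : (Fin n → ZMod 2) × (Fin n → ZMod 2),
              ((2 : ℝ) ^ n)⁻¹ * ((er a x * charDist n f a) * (er b x * charDist n f b) *
                charDist n f x) := by
        refine Finset.sum_congr rfl fun a _ => Finset.sum_congr rfl fun b _ => ?_
        rw [hinv (a + b), Finset.mul_sum, Finset.mul_sum]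
        refine Finset.sum_congr rfl fun x _ => ?_
        rw [er_add_left]
        ring
    _ = ∑ x : (Fin n → ZMod 2) × (Fin n → ZMod 2),
          ∑ a : (Fin n → ZMod 2) × (Fin n → ZMod 2),
            ∑ b : (Fin n → ZMod 2) × (Fin n → ZMod 2),
              ((2 : ℝ) ^ n)⁻¹ * ((er a x * charDist n f a) * (er b x * charDist n f b) *
                charDist n f x) := by
        rw [show (∑ a : (Fin n → ZMod 2) × (Fin n → ZMod 2),
          ∑ b : (Fin n → ZMod 2) × (Fin n → ZMod 2),
            ∑ x : (Fin n → ZMod 2) × (Fin n → ZMod 2),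
              ((2 : ℝ) ^ n)⁻¹ * ((er a x * charDist n f a) * (er b x * charDist n f b) *
                charDist n f x))
          = ∑ a : (Fin n → ZMod 2) × (Fin n → ZMod 2),
          ∑ x : (Fin n → ZMod 2) × (Fin n → ZMod 2),
            ∑ b : (Fin n → ZMod 2) × (Fin n → ZMod 2),
              ((2 : ℝ) ^ n)⁻¹ * ((er a x * charDist n f a) * (er b x * charDist n f b) *
                charDist n f x)
          from Finset.sum_congr rfl fun a _ => by rw [Finset.sum_comm]]
        rw [Finset.sum_comm]
    _ = ∑ x : (Fin n → ZMod 2) × (Fin n → ZMod 2),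
          ((2 : ℝ) ^ n)⁻¹ * (((2 : ℝ) ^ n * charDist n f x) * ((2 : ℝ) ^ n * charDist n f x) *
            charDist n f x) := by
        refine Finset.sum_congr rfl fun x _ => ?_
        calc ∑ a : (Fin n → ZMod 2) × (Fin n → ZMod 2),
              ∑ b : (Fin n → ZMod 2) × (Fin n → ZMod 2),
                ((2 : ℝ) ^ n)⁻¹ * ((er a x * charDist n f a) * (er b x * charDist n f b) *
                  charDist n f x)
            = ∑ a : (Fin n → ZMod 2) × (Fin n → ZMod 2),
              ∑ b : (Fin n → ZMod 2) × (Fin n → ZMod 2),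
                (((2 : ℝ) ^ n)⁻¹ * charDist n f x) *
                  ((er a x * charDist n f a) * (er b x * charDist n f b)) := by
              exact Finset.sum_congr rfl fun a _ => Finset.sum_congr rfl fun b _ => by ring
          _ = (((2 : ℝ) ^ n)⁻¹ * charDist n f x) *
                ((∑ a : (Fin n → ZMod 2) × (Fin n → ZMod 2), er a x * charDist n f a) *
                 (∑ b : (Fin n → ZMod 2) × (Fin n → ZMod 2), er b x * charDist n f b)) :=
              sum_factor _ _ _
          _ = ((2 : ℝ) ^ n)⁻¹ * (((2 : ℝ) ^ n * charDist n f x) *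
                ((2 : ℝ) ^ n * charDist n f x) * charDist n f x) := by
              rw [hA x]
              ring
    _ = (2 : ℝ) ^ n * ∑ x : (Fin n → ZMod 2) × (Fin n → ZMod 2),
          charDist n f x ^ 3 := by
        rw [Finset.mul_sum]
        refine Finset.sum_congr rfl fun x _ => ?_
        field_simp

end Stmt6Aux

open Stmt6Aux

/-- existence of a large approximate subgroup of Paulis with
high expectation values, given high Gowers-3 norm. -/
theorem stmt_6 :
    ∃ c : ℝ, 0 < c ∧
      ∀ n : ℕ, 1 ≤ n → ∀ γ : ℝ, γ ∈ Set.Ioc (0 : ℝ) 1 →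
        ∀ f : (Fin n → ZMod 2) → ℂ, (∑ x : Fin n → ZMod 2, ‖f x‖ ^ 2 = 1) →
          (2 : ℝ) ^ n * (∑ x : (Fin n → ZMod 2) × (Fin n → ZMod 2),
              (charDist n f x) ^ 2) ≥ Real.sqrt γ →
          ∃ S : Finset ((Fin n → ZMod 2) × (Fin n → ZMod 2)),
            (γ ^ 2 / 80) * 2 ^ n ≤ (S.card : ℝ) ∧
            (S.card : ℝ) ≤ (4 / γ) * 2 ^ n ∧
            (∀ x ∈ S, (2 : ℝ) ^ n * charDist n f x ≥ γ / 4) ∧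
            c * γ ^ 5 * (S.card : ℝ) ^ 2 ≤
              (((S ×ˢ S).filter (fun q => q.1 + q.2 ∈ S)).card : ℝ) ∧
            (0 : (Fin n → ZMod 2) × (Fin n → ZMod 2)) ∈ S := by
  refine ⟨1/64, by norm_num, ?_⟩
  intro n hn γ hγ f hf hG
  obtain ⟨hγ0, hγ1⟩ := hγ
  set X := (Fin n → ZMod 2) × (Fin n → ZMod 2)
  set p : X → ℝ := charDist n f with hp
  set N : ℝ := (2 : ℝ) ^ n with hN
  have hN0 : (0 : ℝ) < N := by positivity
  have hNne : N ≠ 0 := ne_of_gt hN0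
  have hpnn : ∀ x, 0 ≤ p x := fun x => charDist_nonneg f x
  have hple : ∀ x, p x ≤ N⁻¹ := fun x => charDist_le f hf x
  have hsum1 : ∑ x : X, p x = 1 := sum_charDist f hf
  have hp0 : p 0 = N⁻¹ := charDist_zero f hf
  -- the set S
  set S : Finset X := univ.filter (fun x => γ / 4 ≤ N * p x) with hS
  have hmemS : ∀ x, x ∈ S ↔ γ / 4 ≤ N * p x := by
    intro x; simp [hS]
  -- (iv)
  have h0S : (0 : X) ∈ S := by
    rw [hmemS]
    rw [hp0, mul_inv_cancel₀ hNne]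
    linarith
  -- p lower bound on S
  have hpS : ∀ x ∈ S, γ / (4 * N) ≤ p x := by
    intro x hx
    rw [hmemS] at hx
    rw [div_le_iff₀ (by positivity)]
    nlinarith
  -- p upper bound off S
  have hpnS' : ∀ x : X, x ∉ S → p x ≤ γ / (4 * N) := by
    intro x hx
    rw [hmemS] at hx
    push_neg at hx
    rw [le_div_iff₀ (by positivity)]
    nlinarith
  -- sum over S bounds
  have hsumS_le : ∑ x ∈ S, p x ≤ 1 := by
    rw [← hsum1]
    exact Finset.sum_le_sum_of_subset_of_nonneg (Finset.subset_univ S)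
      (fun x _ _ => hpnn x)
  -- card upper bound
  have hcard_up : (S.card : ℝ) ≤ (4 / γ) * N := by
    have h1 : (S.card : ℝ) * (γ / (4 * N)) ≤ ∑ x ∈ S, p x := by
      have := Finset.card_nsmul_le_sum S p (γ / (4 * N)) hpS
      simpa [nsmul_eq_mul] using this
    have h2 : (S.card : ℝ) * (γ / (4 * N)) ≤ 1 := h1.trans hsumS_le
    have hx : γ / (4 * N) * (4 * N) = γ := by field_simp
    have h3 : (S.card : ℝ) * γ ≤ 4 * N := by
      have h4 := mul_le_mul_of_nonneg_right h2
        (le_of_lt (by positivity : (0 : ℝ) < 4 * N))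
      rw [one_mul, mul_assoc, hx] at h4
      exact h4
    have heq : (4 / γ) * N = 4 * N / γ := by ring
    rw [heq, le_div_iff₀ hγ0]
    exact h3
  -- card lower bound
  have hsplit : ∑ x ∈ univ \ S, p x ^ 2 + ∑ x ∈ S, p x ^ 2 = ∑ x : X, p x ^ 2 :=
    Finset.sum_sdiff (Finset.subset_univ S)
  have hSsq : ∑ x ∈ S, p x ^ 2 ≤ (S.card : ℝ) * (N⁻¹ * N⁻¹) := by
    have := Finset.sum_le_card_nsmul S (fun x => p x ^ 2) (N⁻¹ * N⁻¹)
      (fun x _ => by nlinarith [hple x, hpnn x])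
    simpa [nsmul_eq_mul] using this
  have hout : ∑ x ∈ univ \ S, p x ^ 2 ≤ γ / (4 * N) := by
    calc ∑ x ∈ univ \ S, p x ^ 2
        ≤ ∑ x ∈ univ \ S, (γ / (4 * N)) * p x := by
          refine Finset.sum_le_sum fun x hx => ?_
          have hx' : x ∉ S := (Finset.mem_sdiff.mp hx).2
          nlinarith [hpnS' x hx', hpnn x]
      _ = (γ / (4 * N)) * ∑ x ∈ univ \ S, p x := (Finset.mul_sum _ _ _).symm
      _ ≤ (γ / (4 * N)) * 1 := by
          refine mul_le_mul_of_nonneg_left ?_ (by positivity)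
          rw [← hsum1]
          exact Finset.sum_le_sum_of_subset_of_nonneg (Finset.subset_univ _)
            (fun x _ _ => hpnn x)
      _ = γ / (4 * N) := mul_one _
  have hsqrtγ : γ ≤ Real.sqrt γ := by
    calc γ = Real.sqrt (γ ^ 2) := (Real.sqrt_sq hγ0.le).symm
      _ ≤ Real.sqrt γ := Real.sqrt_le_sqrt (by nlinarith)
  have e1 : N * (γ / (4 * N)) = γ / 4 := by field_simp
  have e2 : N * ((S.card : ℝ) * (N⁻¹ * N⁻¹)) = (S.card : ℝ) * N⁻¹ := by
    field_simp
  have hsq : Real.sqrt γ ≤ (S.card : ℝ) * N⁻¹ + γ / 4 := by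
    have h5 : N * ∑ x : X, p x ^ 2 ≤ (S.card : ℝ) * N⁻¹ + γ / 4 := by
      calc N * ∑ x : X, p x ^ 2
          = N * (∑ x ∈ univ \ S, p x ^ 2) + N * (∑ x ∈ S, p x ^ 2) := by
            rw [← hsplit]; ring
        _ ≤ (S.card : ℝ) * N⁻¹ + γ / 4 := by
            have b1 := mul_le_mul_of_nonneg_left hout hN0.le
            have b2 := mul_le_mul_of_nonneg_left hSsq hN0.le
            rw [e1] at b1
            rw [e2] at b2
            linarith
    exact le_trans hG h5
  have hcard_low : (γ ^ 2 / 80) * N ≤ (S.card : ℝ) := by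
    have h7 : 3 * γ / 4 ≤ (S.card : ℝ) * N⁻¹ := by linarith
    have h6 : 3 * γ / 4 * N ≤ (S.card : ℝ) := by
      have h8 := mul_le_mul_of_nonneg_right h7 hN0.le
      rw [mul_assoc, inv_mul_cancel₀ hNne, mul_one] at h8
      exact h8
    nlinarith [mul_nonneg (mul_nonneg hγ0.le (sub_nonneg.mpr hγ1)) hN0.le]
  -- triple count
  set GS : Finset (X × X) := (S ×ˢ S).filter (fun q => q.1 + q.2 ∈ S) with hGS
  set F : X × X → ℝ := fun q => p q.1 * p q.2 * p (q.1 + q.2) with hF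
  have hFnn : ∀ q, 0 ≤ F q := fun q =>
    mul_nonneg (mul_nonneg (hpnn _) (hpnn _)) (hpnn _)
  have hT2 : ∑ q : X × X, F q = N * ∑ x : X, p x ^ 3 := by
    rw [Fintype.sum_prod_type]
    exact tripleId f
  have hcs : (∑ x : X, p x ^ 2) ^ 2 ≤ ∑ x : X, p x ^ 3 := by
    have cs := Finset.sum_mul_sq_le_sq_mul_sq univ
      (fun x : X => Real.sqrt (p x)) (fun x : X => p x * Real.sqrt (p x))
    have e1' : ∀ x : X, Real.sqrt (p x) * (p x * Real.sqrt (p x)) = p x ^ 2 := by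
      intro x
      rw [show Real.sqrt (p x) * (p x * Real.sqrt (p x))
        = (Real.sqrt (p x) * Real.sqrt (p x)) * p x from by ring,
        Real.mul_self_sqrt (hpnn x)]
      ring
    have e2' : ∀ x : X, (Real.sqrt (p x)) ^ 2 = p x := fun x => Real.sq_sqrt (hpnn x)
    have e3' : ∀ x : X, (p x * Real.sqrt (p x)) ^ 2 = p x ^ 3 := by
      intro x
      rw [mul_pow, Real.sq_sqrt (hpnn x)]
      ring
    calc (∑ x : X, p x ^ 2) ^ 2
        = (∑ x : X, Real.sqrt (p x) * (p x * Real.sqrt (p x))) ^ 2 := by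
          congr 1
          exact Finset.sum_congr rfl fun x _ => (e1' x).symm
      _ ≤ (∑ x : X, (Real.sqrt (p x)) ^ 2) * ∑ x : X, (p x * Real.sqrt (p x)) ^ 2 := cs
      _ = (∑ x : X, p x) * ∑ x : X, p x ^ 3 := by
          rw [Finset.sum_congr rfl fun x _ => e2' x, Finset.sum_congr rfl fun x _ => e3' x]
      _ = ∑ x : X, p x ^ 3 := by rw [hsum1, one_mul]
  have hTlow : γ / N ≤ ∑ q : X × X, F q := by
    rw [hT2]
    have hs2 : Real.sqrt γ * N⁻¹ ≤ ∑ x : X, p x ^ 2 := by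
      have h := mul_le_mul_of_nonneg_right hG (by positivity : (0:ℝ) ≤ N⁻¹)
      rw [mul_comm N (∑ x : X, p x ^ 2), mul_assoc, mul_inv_cancel₀ hNne, mul_one] at h
      exact h
    have hs2nn : (0:ℝ) ≤ Real.sqrt γ * N⁻¹ := by positivity
    have h9 : (Real.sqrt γ * N⁻¹) ^ 2 ≤ (∑ x : X, p x ^ 2) ^ 2 :=
      pow_le_pow_left₀ hs2nn hs2 2
    have h10 : (Real.sqrt γ * N⁻¹) ^ 2 = γ * (N⁻¹ * N⁻¹) := by
      rw [mul_pow, Real.sq_sqrt hγ0.le]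
      ring
    have h11 : γ * (N⁻¹ * N⁻¹) ≤ ∑ x : X, p x ^ 3 := by
      rw [← h10]
      exact h9.trans hcs
    have h12 := mul_le_mul_of_nonneg_left h11 hN0.le
    calc γ / N = N * (γ * (N⁻¹ * N⁻¹)) := by field_simp
      _ ≤ N * ∑ x : X, p x ^ 3 := h12
  -- bad set bounds
  have hone_r : ∀ b : X, ∑ a : X, p (a + b) = 1 := by
    intro b
    rw [← hsum1]
    simpa using Equiv.sum_comp (Equiv.addRight b) p
  have hone_l : ∀ a : X, ∑ b : X, p (a + b) = 1 := by
    intro a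
    rw [← hsum1]
    simpa using Equiv.sum_comp (Equiv.addLeft a) p
  have hJ1 : ∑ q : X × X, p q.2 * p (q.1 + q.2) = 1 := by
    rw [Fintype.sum_prod_type, Finset.sum_comm]
    calc ∑ b : X, ∑ a : X, p b * p (a + b)
        = ∑ b : X, p b * ∑ a : X, p (a + b) :=
          Finset.sum_congr rfl fun b _ => (Finset.mul_sum _ _ _).symm
      _ = ∑ b : X, p b := by
          refine Finset.sum_congr rfl fun b _ => ?_
          rw [hone_r b, mul_one]
      _ = 1 := hsum1
  have hJ2 : ∑ q : X × X, p q.1 * p (q.1 + q.2) = 1 := by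
    rw [Fintype.sum_prod_type]
    calc ∑ a : X, ∑ b : X, p a * p (a + b)
        = ∑ a : X, p a * ∑ b : X, p (a + b) :=
          Finset.sum_congr rfl fun a _ => (Finset.mul_sum _ _ _).symm
      _ = ∑ a : X, p a := by
          refine Finset.sum_congr rfl fun a _ => ?_
          rw [hone_l a, mul_one]
      _ = 1 := hsum1
  have hJ3 : ∑ q : X × X, p q.1 * p q.2 = 1 := by
    rw [Fintype.sum_prod_type]
    calc ∑ a : X, ∑ b : X, p a * p b
        = (∑ a : X, p a) * (∑ b : X, p b) := (Finset.sum_mul_sum _ _ _ _).symm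
      _ = 1 := by rw [hsum1, one_mul]
  set A : Finset (X × X) := univ.filter (fun q => q.1 ∉ S) with hA
  set B : Finset (X × X) := univ.filter (fun q => q.2 ∉ S) with hB
  set C : Finset (X × X) := univ.filter (fun q => q.1 + q.2 ∉ S) with hC
  have hbad : ∀ (D : Finset (X × X)) (g : X × X → ℝ),
      (∀ q, 0 ≤ g q) → (∀ q ∈ D, F q ≤ γ / (4 * N) * g q) →
      (∑ q : X × X, g q = 1) → ∑ q ∈ D, F q ≤ γ / (4 * N) := by
    intro D g hgnn hFg hg1
    calc ∑ q ∈ D, F q ≤ ∑ q ∈ D, γ / (4 * N) * g q := Finset.sum_le_sum hFg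
      _ = γ / (4 * N) * ∑ q ∈ D, g q := (Finset.mul_sum _ _ _).symm
      _ ≤ γ / (4 * N) * 1 := by
          refine mul_le_mul_of_nonneg_left ?_ (by positivity)
          rw [← hg1]
          exact Finset.sum_le_sum_of_subset_of_nonneg (Finset.subset_univ _)
            (fun q _ _ => hgnn q)
      _ = γ / (4 * N) := mul_one _
  have hbadA : ∑ q ∈ A, F q ≤ γ / (4 * N) := by
    refine hbad A (fun q => p q.2 * p (q.1 + q.2))
      (fun q => mul_nonneg (hpnn _) (hpnn _)) (fun q hq => ?_) hJ1
    rw [hA, Finset.mem_filter] at hq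
    have h := hpnS' q.1 hq.2
    simp only [hF]
    nlinarith [hpnn q.2, hpnn (q.1 + q.2), mul_nonneg (hpnn q.2) (hpnn (q.1 + q.2))]
  have hbadB : ∑ q ∈ B, F q ≤ γ / (4 * N) := by
    refine hbad B (fun q => p q.1 * p (q.1 + q.2))
      (fun q => mul_nonneg (hpnn _) (hpnn _)) (fun q hq => ?_) hJ2
    rw [hB, Finset.mem_filter] at hq
    have h := hpnS' q.2 hq.2
    simp only [hF]
    nlinarith [hpnn q.1, hpnn (q.1 + q.2), mul_nonneg (hpnn q.1) (hpnn (q.1 + q.2))]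
  have hbadC : ∑ q ∈ C, F q ≤ γ / (4 * N) := by
    refine hbad C (fun q => p q.1 * p q.2)
      (fun q => mul_nonneg (hpnn _) (hpnn _)) (fun q hq => ?_) hJ3
    rw [hC, Finset.mem_filter] at hq
    have h := hpnS' (q.1 + q.2) hq.2
    simp only [hF]
    nlinarith [hpnn q.1, hpnn q.2, mul_nonneg (hpnn q.1) (hpnn q.2)]
  -- union bound
  have hUB : ∀ s t : Finset (X × X), ∑ q ∈ s ∪ t, F q ≤ ∑ q ∈ s, F q + ∑ q ∈ t, F q := by
    intro s t
    have h1 : s ∪ t = s ∪ (t \ s) := by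
      rw [Finset.union_sdiff_self_eq_union]
    rw [h1, Finset.sum_union Finset.disjoint_sdiff]
    have h2 : ∑ q ∈ t \ s, F q ≤ ∑ q ∈ t, F q :=
      Finset.sum_le_sum_of_subset_of_nonneg (Finset.sdiff_subset)
        (fun q _ _ => hFnn q)
    linarith
  have hcover : (univ : Finset (X × X)) ⊆ GS ∪ (A ∪ (B ∪ C)) := by
    intro q _
    by_cases h1 : q.1 ∈ S
    · by_cases h2 : q.2 ∈ S
      · by_cases h3 : q.1 + q.2 ∈ S
        · exact Finset.mem_union_left _ (by
            rw [hGS, Finset.mem_filter, Finset.mem_product]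
            exact ⟨⟨h1, h2⟩, h3⟩)
        · refine Finset.mem_union_right _ (Finset.mem_union_right _
            (Finset.mem_union_right _ ?_))
          rw [hC, Finset.mem_filter]
          exact ⟨Finset.mem_univ _, h3⟩
      · refine Finset.mem_union_right _ (Finset.mem_union_right _
          (Finset.mem_union_left _ ?_))
        rw [hB, Finset.mem_filter]
        exact ⟨Finset.mem_univ _, h2⟩
    · refine Finset.mem_union_right _ (Finset.mem_union_left _ ?_)
      rw [hA, Finset.mem_filter]
      exact ⟨Finset.mem_univ _, h1⟩
  have hGSlow : γ / (4 * N) ≤ ∑ q ∈ GS, F q := by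
    have hT3 : ∑ q : X × X, F q ≤ ∑ q ∈ GS, F q + 3 * (γ / (4 * N)) := by
      calc ∑ q : X × X, F q ≤ ∑ q ∈ GS ∪ (A ∪ (B ∪ C)), F q :=
            Finset.sum_le_sum_of_subset_of_nonneg hcover (fun q _ _ => hFnn q)
        _ ≤ ∑ q ∈ GS, F q + (∑ q ∈ A, F q + (∑ q ∈ B, F q + ∑ q ∈ C, F q)) := by
            have u1 := hUB GS (A ∪ (B ∪ C))
            have u2 := hUB A (B ∪ C)
            have u3 := hUB B C
            linarith
        _ ≤ ∑ q ∈ GS, F q + 3 * (γ / (4 * N)) := by linarith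
    have : γ / N ≤ ∑ q ∈ GS, F q + 3 * (γ / (4 * N)) := le_trans hTlow hT3
    have e3 : γ / N - 3 * (γ / (4 * N)) = γ / (4 * N) := by field_simp; ring
    linarith
  have hGScard : ∑ q ∈ GS, F q ≤ (GS.card : ℝ) * (N⁻¹ * N⁻¹ * N⁻¹) := by
    have := Finset.sum_le_card_nsmul GS F (N⁻¹ * N⁻¹ * N⁻¹)
      (fun q _ => by
        have a1 : p q.1 * p q.2 ≤ N⁻¹ * N⁻¹ :=
          mul_le_mul (hple _) (hple _) (hpnn _) (by positivity)
        have a2 : p q.1 * p q.2 * p (q.1 + q.2) ≤ (N⁻¹ * N⁻¹) * N⁻¹ :=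
          mul_le_mul a1 (hple _) (hpnn _) (by positivity)
        exact a2)
    simpa [nsmul_eq_mul] using this
  have hGfinal : γ * (N * N) / 4 ≤ (GS.card : ℝ) := by
    have h9 : γ / (4 * N) ≤ (GS.card : ℝ) * (N⁻¹ * N⁻¹ * N⁻¹) :=
      hGSlow.trans hGScard
    have h10 := mul_le_mul_of_nonneg_right h9
      (by positivity : (0:ℝ) ≤ N * N * N)
    have e4 : (GS.card : ℝ) * (N⁻¹ * N⁻¹ * N⁻¹) * (N * N * N) = (GS.card : ℝ) := by
      field_simp
    have e5 : γ / (4 * N) * (N * N * N) = γ * (N * N) / 4 := by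
      field_simp
    rw [e4, e5] at h10
    exact h10
  -- finish
  have h3' : (S.card : ℝ) * γ ≤ 4 * N := by
    have hm := mul_le_mul_of_nonneg_right hcard_up hγ0.le
    have e6 : 4 / γ * N * γ = 4 * N := by field_simp
    rw [e6] at hm
    exact hm
  have hA1 : (S.card : ℝ) ^ 2 * γ ^ 2 ≤ 16 * (N * N) := by
    have hnn : (0:ℝ) ≤ (S.card : ℝ) * γ :=
      mul_nonneg (Nat.cast_nonneg _) hγ0.le
    nlinarith [mul_self_le_mul_self hnn h3']
  refine ⟨S, hcard_low, hcard_up, fun x hx => (hmemS x).mp hx, ?_, h0S⟩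
  have goal1 : (1:ℝ)/64 * γ ^ 5 * (S.card : ℝ) ^ 2 ≤ (GS.card : ℝ) := by
    have k0 : γ ^ 3 ≤ γ := by nlinarith
    nlinarith [mul_le_mul_of_nonneg_left hA1 (by positivity : (0:ℝ) ≤ γ ^ 3),
      mul_nonneg (sub_nonneg.mpr k0) (mul_nonneg hN0.le hN0.le), hGfinal]
  exact goal1
end
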